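/- arXiv:2509.00252 — 7 statements merged into one kernel-verified Lean document; each statement's English description precedes it below -/
import Mathlib

section
/- Let V be a vector space over a field F, and v_1,…,v_m, w_1,…,w_m ∈ V. Then there exist linear operators φ_1,…,φ_m : V → V with φ_1(v_1)+…+φ_m(v_m)=0 and φ_1(w_1)+…+φ_m(w_m)≠0 if and only if there is no scalar λ ∈ F with w_i = λ v_i for all i = 1,…,m. -/
open LinearMap

/-- For a nonzero vector over a field there is a functional taking value 1 on it. -/
lemma exists_dual_one (F : Type*) [Field F] (V : Type*) [AddCommGroup V] [Module F V]
    {x : V} (hx : x ≠ 0) : ∃ f : V →ₗ[F] F, f x = 1 := by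
  obtain ⟨g, hg⟩ := (LinearMap.toSpanSingleton F V x).exists_leftInverse_of_injective
    (LinearMap.ker_toSpanSingleton F hx)
  refine ⟨g, ?_⟩
  have := LinearMap.congr_fun hg 1
  simpa [LinearMap.toSpanSingleton_apply] using this

/-- If `y ∉ span {x}` there is a functional vanishing on `x` and taking value 1 on `y`. -/
lemma exists_dual_zero_one (F : Type*) [Field F] (V : Type*) [AddCommGroup V] [Module F V]
    {x y : V} (h : y ∉ Submodule.span F {x}) :
    ∃ f : V →ₗ[F] F, f x = 0 ∧ f y = 1 := by
  set p := Submodule.span F {x}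
  have hy : p.mkQ y ≠ 0 := by
    simpa [Submodule.Quotient.mk_eq_zero] using h
  obtain ⟨g, hg⟩ := exists_dual_one F (V ⧸ p) hy
  refine ⟨g.comp p.mkQ, ?_, ?_⟩
  · have hx : p.mkQ x = 0 := by
      simp [Submodule.Quotient.mk_eq_zero, p, Submodule.mem_span_singleton_self]
    simp [hx]
  · simpa using hg

lemma sum_single_apply {F : Type*} [Field F] {V : Type*} [AddCommGroup V] [Module F V]
    {m : ℕ} (j : Fin m) (f : V →ₗ[F] V) (x : Fin m → V) :
    (∑ i : Fin m, (Pi.single j f : Fin m → V →ₗ[F] V) i (x i)) = f (x j) := by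
  classical
  calc (∑ i : Fin m, (Pi.single j f : Fin m → V →ₗ[F] V) i (x i))
      = ∑ i : Fin m, if i = j then f (x i) else 0 := by
        refine Finset.sum_congr rfl fun i _ => ?_
        by_cases h : i = j <;> simp [Pi.single_apply, h]
    _ = f (x j) := by simp

/-- there exist linear operators `φᵢ` with `∑ φᵢ(vᵢ) = 0` and
`∑ φᵢ(wᵢ) ≠ 0` iff there is no scalar `λ` with `wᵢ = λ vᵢ` for all `i`. -/
theorem stmt1 (F : Type*) [Field F] (V : Type*) [AddCommGroup V] [Module F V]
    (m : ℕ) (v w : Fin m → V) :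
    (∃ φ : Fin m → (V →ₗ[F] V),
        (∑ i : Fin m, φ i (v i)) = 0 ∧ (∑ i : Fin m, φ i (w i)) ≠ 0) ↔
      ¬ ∃ lam : F, ∀ i : Fin m, w i = lam • v i := by
  classical
  constructor
  · rintro ⟨φ, h0, hne⟩ ⟨lam, hlam⟩
    apply hne
    calc (∑ i : Fin m, φ i (w i)) = ∑ i : Fin m, lam • φ i (v i) := by
          refine Finset.sum_congr rfl fun i _ => ?_
          rw [hlam i, map_smul]
      _ = lam • ∑ i : Fin m, φ i (v i) := by rw [Finset.smul_sum]
      _ = 0 := by rw [h0, smul_zero]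
  · intro h
    by_cases hB : ∃ i, w i ∉ Submodule.span F {v i}
    · obtain ⟨i, hi⟩ := hB
      have hwi : w i ≠ 0 := fun hw => hi (hw ▸ Submodule.zero_mem _)
      obtain ⟨g, hg0, hg1⟩ := exists_dual_zero_one F V hi
      refine ⟨Pi.single i (g.smulRight (w i)), ?_, ?_⟩
      · rw [_root_.sum_single_apply]; simp [hg0]
      · rw [_root_.sum_single_apply]; simp [hg1, hwi]
    · push_neg at hB
      choose lam hlam using fun i => (Submodule.mem_span_singleton).1 (hB i)
      -- w i = lam i • v i, with hlam : lam i • v i = w i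
      by_cases hv : ∀ i, v i = 0
      · exfalso
        exact h ⟨0, fun i => by rw [← hlam i, hv i, smul_zero, smul_zero]⟩
      · push_neg at hv
        obtain ⟨k, hk⟩ := hv
        push_neg at h
        obtain ⟨j, hj⟩ := h (lam k)
        have hvj : v j ≠ 0 := by
          intro hz
          exact hj (by rw [← hlam j, hz, smul_zero, smul_zero])
        have hlamne : lam j ≠ lam k := by
          intro he
          exact hj (by rw [← hlam j, he])
        have hjk : j ≠ k := fun he => hlamne (he ▸ rfl)
        obtain ⟨gj, hgj⟩ := exists_dual_one F V hvj
        obtain ⟨gk, hgk⟩ := exists_dual_one F V hk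
        refine ⟨Pi.single j (gj.smulRight (v j)) + Pi.single k (gk.smulRight (-(v j))), ?_, ?_⟩
        · simp only [Pi.add_apply, LinearMap.add_apply, Finset.sum_add_distrib,
            _root_.sum_single_apply]
          simp [hgj, hgk]
        · simp only [Pi.add_apply, LinearMap.add_apply, Finset.sum_add_distrib,
            _root_.sum_single_apply]
          rw [← hlam j, ← hlam k]
          simp only [LinearMap.smulRight_apply, map_smul, hgj, hgk, smul_eq_mul, mul_one, one_smul]
          rw [smul_neg, ← sub_eq_add_neg, ← sub_smul]
          intro hz
          rcases smul_eq_zero.1 hz with h1 | h2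
          · exact hlamne (sub_eq_zero.1 h1)
          · exact hvj h2
end

section
/- Let A = A_n(⪯,R) be an incidence ring, and suppose R contains central pairwise orthogonal idempotents e_1,…,e_d with e_1+…+e_d = 1. For a nonempty subset S ⊆ A, the set S ∪ R·I_n generates A as a ring if and only if for each i = 1,…,d, the set e_i S ∪ e_i R·I_n generates e_i A as a ring. -/
/-- The set of matrices of the incidence ring `A_n(⪯, R)`:
matrices with `A i j = 0` whenever `¬ i ⪯ j`. -/
def IncSet (n : ℕ) (r : Fin n → Fin n → Prop) (R : Type*) [Ring R] :
    Set (Matrix (Fin n) (Fin n) R) :=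
  {A | ∀ i j, ¬ r i j → A i j = 0}

/-- The covering relation `i ⋖ j` of `⪯` : `i ≺ j` and no `k` with `i ≺ k ≺ j`. -/
def Covers {n : ℕ} (r : Fin n → Fin n → Prop) (i j : Fin n) : Prop :=
  r i j ∧ i ≠ j ∧ ∀ k, ¬ ((r i k ∧ i ≠ k) ∧ (r k j ∧ k ≠ j))

/-- `Gen_m(A,R)` : the set of `m`-tuples of elements of the incidence ring which
together with all scalar matrices `R·Iₙ` generate the incidence ring. -/
def GenSet (n m : ℕ) (r : Fin n → Fin n → Prop) (R : Type*) [Ring R] :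
    Set (Fin m → Matrix (Fin n) (Fin n) R) :=
  {A | (∀ α, A α ∈ IncSet n r R) ∧
    (Subring.closure (Set.range A ∪ Set.range (fun c : R => Matrix.scalar (Fin n) c)) :
        Set (Matrix (Fin n) (Fin n) R)) = IncSet n r R}

/-- The incidence ring `A_n(⪯, R)` as a subring of the full matrix ring. -/
def IncSubring (n : ℕ) (r : Fin n → Fin n → Prop) (hrefl : ∀ i, r i i)
    (htrans : ∀ i j k, r i j → r j k → r i k) (R : Type*) [Ring R] :
    Subring (Matrix (Fin n) (Fin n) R) where
  carrier := IncSet n r R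
  zero_mem' := by intro i j _; rfl
  one_mem' := by
    intro i j h
    have hne : i ≠ j := by rintro rfl; exact h (hrefl i)
    simp [Matrix.one_apply_ne hne]
  add_mem' := by
    intro A B hA hB i j h
    simp [Matrix.add_apply, hA i j h, hB i j h]
  neg_mem' := by
    intro A hA i j h
    simp [Matrix.neg_apply, hA i j h]
  mul_mem' := by
    intro A B hA hB i j h
    simp only [Matrix.mul_apply]
    refine Finset.sum_eq_zero fun k _ => ?_
    by_cases hik : r i k
    · by_cases hkj : r k j
      · exact absurd (htrans i k j hik hkj) h
      · rw [hB k j hkj, mul_zero]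
    · rw [hA i k hik, zero_mul]

section Aux

variable {n : ℕ} {r : Fin n → Fin n → Prop} {R : Type*} [Ring R]

lemma scalar_mem_inc (hrefl : ∀ i, r i i) (c : R) :
    Matrix.scalar (Fin n) c ∈ IncSet n r R := by
  intro i j h
  have hne : i ≠ j := fun hij => h (hij ▸ hrefl i)
  simp [Matrix.scalar_apply, Matrix.diagonal_apply_ne _ hne]

lemma smul_mem_inc (c : R) {A : Matrix (Fin n) (Fin n) R} (hA : A ∈ IncSet n r R) :
    c • A ∈ IncSet n r R := fun i j h => by
  simp [Matrix.smul_apply, hA i j h]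

lemma add_mem_inc {A B : Matrix (Fin n) (Fin n) R} (hA : A ∈ IncSet n r R)
    (hB : B ∈ IncSet n r R) : A + B ∈ IncSet n r R := fun i j h => by
  simp [Matrix.add_apply, hA i j h, hB i j h]

lemma neg_mem_inc {A : Matrix (Fin n) (Fin n) R} (hA : A ∈ IncSet n r R) :
    -A ∈ IncSet n r R := fun i j h => by
  simp [Matrix.neg_apply, hA i j h]

lemma mul_mem_inc (htrans : ∀ i j k, r i j → r j k → r i k)
    {A B : Matrix (Fin n) (Fin n) R} (hA : A ∈ IncSet n r R)
    (hB : B ∈ IncSet n r R) : A * B ∈ IncSet n r R := by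
  intro i j h
  simp only [Matrix.mul_apply]
  refine Finset.sum_eq_zero fun k _ => ?_
  by_cases hik : r i k
  · by_cases hkj : r k j
    · exact absurd (htrans i k j hik hkj) h
    · rw [hB k j hkj, mul_zero]
  · rw [hA i k hik, zero_mul]

lemma smul_scalar_eq (c b : R) :
    c • Matrix.scalar (Fin n) b = Matrix.scalar (Fin n) (c * b) := by
  ext i j
  by_cases hij : i = j <;>
    simp [Matrix.scalar_apply, Matrix.diagonal_apply, hij]

lemma smul_mul_smul_central {f : R} (hc : ∀ x, f * x = x * f) (hi : f * f = f)
    (A B : Matrix (Fin n) (Fin n) R) : (f • A) * (f • B) = f • (A * B) := by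
  ext i j
  simp only [Matrix.mul_apply, Matrix.smul_apply, smul_eq_mul, Finset.mul_sum]
  refine Finset.sum_congr rfl fun k _ => ?_
  rw [hc (A i k), mul_assoc (A i k) f (f * B k j), ← mul_assoc f f (B k j), hi,
    ← mul_assoc (A i k) f (B k j), ← hc (A i k), mul_assoc]

/-- The image of the incidence set under multiplication by a central idempotent,
as a non-unital subring. -/
def eImage (n : ℕ) (r : Fin n → Fin n → Prop)
    (htrans : ∀ i j k, r i j → r j k → r i k) (R : Type*) [Ring R]
    (f : R) (hc : ∀ x, f * x = x * f) (hi : f * f = f) :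
    NonUnitalSubring (Matrix (Fin n) (Fin n) R) where
  carrier := (fun A => f • A) '' IncSet n r R
  zero_mem' := ⟨0, fun _ _ _ => rfl, smul_zero f⟩
  add_mem' := by
    rintro _ _ ⟨A, hA, rfl⟩ ⟨B, hB, rfl⟩
    exact ⟨A + B, add_mem_inc hA hB, smul_add f A B⟩
  neg_mem' := by
    rintro _ ⟨A, hA, rfl⟩
    exact ⟨-A, neg_mem_inc hA, smul_neg f A⟩
  mul_mem' := by
    rintro _ _ ⟨A, hA, rfl⟩ ⟨B, hB, rfl⟩
    exact ⟨A * B, mul_mem_inc htrans hA hB, (smul_mul_smul_central hc hi A B).symm⟩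

end Aux

/-- if R contains central pairwise orthogonal idempotents
`e 1, …, e d` summing to 1, then a nonempty `S ⊆ A_n(⪯,R)` together with the
scalar matrices generates `A_n(⪯,R)` as a ring iff for each `i`, the set
`eᵢ S ∪ eᵢ R·Iₙ` generates `eᵢ A_n(⪯,R)` as a ring. -/
theorem stmt5 (n : ℕ) (r : Fin n → Fin n → Prop)
    (hrefl : ∀ i, r i i) (hanti : ∀ i j, r i j → r j i → i = j)
    (htrans : ∀ i j k, r i j → r j k → r i k)
    (R : Type*) [Ring R] (d : ℕ) (e : Fin d → R)
    (hcentral : ∀ i x, e i * x = x * e i)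
    (hidem : ∀ i, e i * e i = e i)
    (horth : ∀ i j, i ≠ j → e i * e j = 0)
    (hsum : (∑ i : Fin d, e i) = 1)
    (S : Set (Matrix (Fin n) (Fin n) R)) (hS : S ⊆ IncSet n r R)
    (hSne : S.Nonempty) :
    (Subring.closure (S ∪ Set.range fun c : R => Matrix.scalar (Fin n) c) :
        Set (Matrix (Fin n) (Fin n) R)) = IncSet n r R ↔
      ∀ i : Fin d,
        (NonUnitalSubring.closure
            ((fun A => e i • A) '' S ∪
              Set.range fun c : R => Matrix.scalar (Fin n) (e i * c)) :
          Set (Matrix (Fin n) (Fin n) R)) = (fun A => e i • A) '' IncSet n r R := by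
  constructor
  · intro h i
    apply Set.Subset.antisymm
    · exact NonUnitalSubring.closure_le
        (t := eImage n r htrans R (e i) (hcentral i) (hidem i)) |>.mpr (by
          rintro x (⟨s, hs, rfl⟩ | ⟨c, rfl⟩)
          · exact ⟨s, hS hs, rfl⟩
          · exact ⟨Matrix.scalar (Fin n) c, scalar_mem_inc hrefl c,
              smul_scalar_eq (e i) c⟩)
    · rintro _ ⟨A, hA, rfl⟩
      rw [← h] at hA
      induction hA using Subring.closure_induction with
      | mem x hx =>
        rcases hx with hx | ⟨c, rfl⟩
        · exact NonUnitalSubring.subset_closure (Or.inl ⟨x, hx, rfl⟩)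
        · show e i • Matrix.scalar (Fin n) c ∈ _
          rw [smul_scalar_eq]
          exact NonUnitalSubring.subset_closure (Or.inr ⟨c, rfl⟩)
      | zero => show e i • (0 : Matrix (Fin n) (Fin n) R) ∈ _; rw [smul_zero]; exact zero_mem _
      | one =>
        show e i • (1 : Matrix (Fin n) (Fin n) R) ∈ _
        have : (1 : Matrix (Fin n) (Fin n) R) = Matrix.scalar (Fin n) 1 :=
          (map_one (Matrix.scalar (Fin n))).symm
        rw [this, smul_scalar_eq]
        exact NonUnitalSubring.subset_closure (Or.inr ⟨1, rfl⟩)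
      | add x y hx hy px py => show e i • (x + y) ∈ _; rw [smul_add]; exact add_mem px py
      | neg x hx px => show e i • (-x) ∈ _; rw [smul_neg]; exact neg_mem px
      | mul x y hx hy px py =>
        show e i • (x * y) ∈ _
        rw [← smul_mul_smul_central (hcentral i) (hidem i)]
        exact mul_mem px py
  · intro h
    apply Set.Subset.antisymm
    · exact Subring.closure_le (t := IncSubring n r hrefl htrans R) |>.mpr (by
        rintro x (hx | ⟨c, rfl⟩)
        · exact hS hx
        · exact scalar_mem_inc hrefl c)
    · intro A hA
      have hAsum : A = ∑ i : Fin d, e i • A := by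
        rw [← Finset.sum_smul, hsum, one_smul]
      rw [hAsum]
      refine sum_mem fun i _ => ?_
      have hmem : e i • A ∈ (NonUnitalSubring.closure
          ((fun A => e i • A) '' S ∪
            Set.range fun c : R => Matrix.scalar (Fin n) (e i * c)) :
          Set (Matrix (Fin n) (Fin n) R)) := by
        rw [h i]; exact ⟨A, hA, rfl⟩
      refine NonUnitalSubring.closure_le
        (t := (Subring.closure (S ∪ Set.range fun c : R =>
          Matrix.scalar (Fin n) c)).toNonUnitalSubring) |>.mpr ?_ hmem
      rintro _ (⟨s, hs, rfl⟩ | ⟨c, rfl⟩)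
      · show e i • s ∈ _
        have : e i • s = Matrix.scalar (Fin n) (e i) * s := by
          rw [Matrix.scalar_apply, ← Matrix.smul_eq_diagonal_mul]
        rw [this]
        exact mul_mem (Subring.subset_closure (Or.inr ⟨e i, rfl⟩))
          (Subring.subset_closure (Or.inl hs))
      · show Matrix.scalar (Fin n) (e i * c) ∈ _
        exact Subring.subset_closure (Or.inr ⟨e i * c, rfl⟩)
end

section
/- The Jacobson radical of the incidence ring A = A_n(⪯,R) equals Σ_{i=1}^n E_{ii}·J(R) + Σ_{i ⋖ j} E_{ij}·R, where the second sum ranges over all pairs i ≺ j (i strictly below j in the order); equivalently, J(A) = {A ∈ A : A_{ii} ∈ J(R) for all i}. -/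
/-- In any ring, `y * x + 1` is a unit when `x` is in the Jacobson radical. -/
lemma isUnit_jacMul_add_one {R : Type*} [Ring R] {x : R}
    (hx : x ∈ Ideal.jacobson (⊥ : Ideal R)) (y : R) : IsUnit (y * x + 1) := by
  have key : ∀ y : R, ∃ z : R, z * (y * x + 1) = 1 := by
    intro y
    obtain ⟨z, hz⟩ := Ideal.mem_jacobson_iff.mp hx y
    rw [Ideal.mem_bot] at hz
    refine ⟨z, ?_⟩
    rw [mul_add, mul_one, ← mul_assoc]
    exact sub_eq_zero.mp hz
  obtain ⟨z, hz⟩ := key y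
  have h1 : z * (y * x) + z = 1 := by rw [← hz, mul_add, mul_one]
  have hz2 : (-(z * y)) * x + 1 = z := by
    rw [neg_mul, mul_assoc]
    exact (eq_neg_add_iff_add_eq.mpr h1).symm
  obtain ⟨w, hw⟩ := key (-(z * y))
  rw [hz2] at hw
  have hweq : w = y * x + 1 := by
    calc w = w * (z * (y * x + 1)) := by rw [hz, mul_one]
    _ = (w * z) * (y * x + 1) := by rw [mul_assoc]
    _ = y * x + 1 := by rw [hw, one_mul]
  exact ⟨⟨y * x + 1, z, by rw [← hweq]; exact hw, hz⟩, rfl⟩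

/-- A matrix supported strictly above the diagonal (w.r.t. a partial order) is nilpotent. -/
lemma strict_nilpotent {n : ℕ} {r : Fin n → Fin n → Prop}
    (hanti : ∀ i j, r i j → r j i → i = j)
    (htrans : ∀ i j k, r i j → r j k → r i k)
    {R : Type*} [Ring R] (S : Matrix (Fin n) (Fin n) R)
    (hS : ∀ i j, ¬ (r i j ∧ i ≠ j) → S i j = 0) :
    S ^ n = 0 := by
  classical
  set h : Fin n → ℕ := fun i => (Finset.univ.filter (fun k => r k i ∧ k ≠ i)).card with hh
  have hmono : ∀ i j, r i j → i ≠ j → h i < h j := by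
    intro i j hij hne
    have hnotmem : i ∉ Finset.univ.filter (fun k => r k i ∧ k ≠ i) := by simp
    have hsub : insert i (Finset.univ.filter (fun k => r k i ∧ k ≠ i)) ⊆
        Finset.univ.filter (fun k => r k j ∧ k ≠ j) := by
      intro k hk
      simp only [Finset.mem_insert, Finset.mem_filter, Finset.mem_univ, true_and] at hk ⊢
      rcases hk with rfl | ⟨hki, hkne⟩
      · exact ⟨hij, hne⟩
      · refine ⟨htrans _ _ _ hki hij, ?_⟩
        rintro rfl
        exact hne (hanti _ _ hij hki)
    calc h i < h i + 1 := Nat.lt_succ_self _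
      _ = (insert i (Finset.univ.filter (fun k => r k i ∧ k ≠ i))).card :=
        (Finset.card_insert_of_notMem hnotmem).symm
      _ ≤ h j := Finset.card_le_card hsub
  have hbound : ∀ i, h i < n := by
    intro i
    have hss : (Finset.univ.filter (fun k => r k i ∧ k ≠ i)) ⊂ Finset.univ := by
      refine Finset.ssubset_iff_of_subset (Finset.subset_univ _) |>.mpr ?_
      exact ⟨i, Finset.mem_univ i, by simp⟩
    simpa using Finset.card_lt_card hss
  have main : ∀ m i j, h j < h i + m → (S ^ m) i j = 0 := by
    intro m
    induction m with
    | zero =>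
      intro i j hj
      rw [pow_zero]
      have hne : i ≠ j := by rintro rfl; omega
      exact Matrix.one_apply_ne hne
    | succ m ih =>
      intro i j hj
      rw [pow_succ, Matrix.mul_apply]
      refine Finset.sum_eq_zero fun k _ => ?_
      by_cases hk : h k < h i + m
      · rw [ih i k hk, zero_mul]
      · by_cases hkj : r k j ∧ k ≠ j
        · exact absurd (hmono k j hkj.1 hkj.2) (by omega)
        · rw [hS k j hkj, mul_zero]
  ext i j
  rw [Matrix.zero_apply]
  exact main n i j ((hbound j).trans_le (Nat.le_add_left n (h i)))

section Aux

variable {n : ℕ} {r : Fin n → Fin n → Prop} (hrefl : ∀ i, r i i)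
  (hanti : ∀ i j, r i j → r j i → i = j)
  (htrans : ∀ i j k, r i j → r j k → r i k)
  {R : Type*} [Ring R]

lemma diag_mem (d : Fin n → R) :
    Matrix.diagonal d ∈ IncSubring n r hrefl htrans R := by
  intro i j hij
  have hne : i ≠ j := fun h => hij (h ▸ hrefl i)
  exact Matrix.diagonal_apply_ne d hne

/-- evaluation of the `i`-th diagonal entry, as a ring hom on the incidence ring. -/
def diagHom (i : Fin n) : IncSubring n r hrefl htrans R →+* R where
  toFun M := (M : Matrix (Fin n) (Fin n) R) i i
  map_one' := Matrix.one_apply_eq i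
  map_zero' := rfl
  map_add' := fun M N => rfl
  map_mul' := by
    intro M N
    show ((M : Matrix (Fin n) (Fin n) R) * (N : Matrix (Fin n) (Fin n) R)) i i = _
    rw [Matrix.mul_apply]
    refine Finset.sum_eq_single i (fun k _ hk => ?_) (by simp)
    by_cases hik : r i k
    · have hki : ¬ r k i := fun hki => hk (hanti _ _ hki hik)
      rw [N.2 k i hki, mul_zero]
    · rw [M.2 i k hik, zero_mul]

omit hanti in
lemma isUnit_of_diag (hanti : ∀ i j, r i j → r j i → i = j) (N : IncSubring n r hrefl htrans R)
    (hd : ∀ i, IsUnit ((N : Matrix (Fin n) (Fin n) R) i i)) : IsUnit N := by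
  set u : Fin n → Rˣ := fun i => (hd i).unit with hu
  have huval : ∀ i, (u i : R) = (N : Matrix (Fin n) (Fin n) R) i i := fun i => (hd i).unit_spec
  set DA : IncSubring n r hrefl htrans R :=
    ⟨Matrix.diagonal (fun i => (((u i)⁻¹ : Rˣ) : R)), diag_mem hrefl htrans _⟩ with hDA
  set D'A : IncSubring n r hrefl htrans R :=
    ⟨Matrix.diagonal (fun i => (u i : R)), diag_mem hrefl htrans _⟩ with hD'A
  have hDD' : DA * D'A = 1 := by
    apply Subtype.ext
    show (Matrix.diagonal _ : Matrix (Fin n) (Fin n) R) * Matrix.diagonal _ = 1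
    rw [Matrix.diagonal_mul_diagonal]
    simp
  have hD'D : D'A * DA = 1 := by
    apply Subtype.ext
    show (Matrix.diagonal _ : Matrix (Fin n) (Fin n) R) * Matrix.diagonal _ = 1
    rw [Matrix.diagonal_mul_diagonal]
    simp
  set S : IncSubring n r hrefl htrans R := DA * N - 1 with hS
  have hScoe : (S : Matrix (Fin n) (Fin n) R) =
      Matrix.diagonal (fun i => (((u i)⁻¹ : Rˣ) : R)) * (N : Matrix (Fin n) (Fin n) R) - 1 := by
    rfl
  have hSstrict : ∀ i j, ¬ (r i j ∧ i ≠ j) → (S : Matrix (Fin n) (Fin n) R) i j = 0 := by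
    intro i j hij
    rw [hScoe, Matrix.sub_apply, Matrix.diagonal_mul]
    by_cases hij' : i = j
    · subst hij'
      rw [← huval i, Matrix.one_apply_eq]
      simp
    · have hrij : ¬ r i j := by
        intro hr; exact hij ⟨hr, hij'⟩
      rw [N.2 i j hrij, mul_zero, Matrix.one_apply_ne hij', sub_zero]
  have hnil : IsNilpotent S := by
    refine ⟨n, Subtype.ext ?_⟩
    rw [SubmonoidClass.coe_pow, ZeroMemClass.coe_zero]
    exact strict_nilpotent hanti htrans _ hSstrict
  have hDAN : IsUnit (DA * N) := by
    have : DA * N = 1 + S := by rw [hS]; abel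
    rw [this]
    exact hnil.isUnit_one_add
  have hD'Aunit : IsUnit D'A := ⟨⟨D'A, DA, hD'D, hDD'⟩, rfl⟩
  have : N = D'A * (DA * N) := by rw [← mul_assoc, hD'D, one_mul]
  rw [this]
  exact hD'Aunit.mul hDAN

end Aux

set_option synthInstance.maxHeartbeats 1000000 in
/-- the Jacobson radical of the incidence ring `A = A_n(⪯,R)`
consists exactly of the matrices in A whose diagonal entries all lie in the
Jacobson radical of R (equivalently, it is `∑ᵢ Eᵢᵢ J(R) + ∑_{i≺j} Eᵢⱼ R`). -/
theorem stmt8 (n : ℕ) (r : Fin n → Fin n → Prop)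
    (hrefl : ∀ i, r i i) (hanti : ∀ i j, r i j → r j i → i = j)
    (htrans : ∀ i j k, r i j → r j k → r i k)
    (R : Type*) [Ring R] :
    (Ideal.jacobson (⊥ : Ideal (IncSubring n r hrefl htrans R)) :
        Set (IncSubring n r hrefl htrans R)) =
      {M : IncSubring n r hrefl htrans R |
        ∀ i, (M : Matrix (Fin n) (Fin n) R) i i ∈ Ideal.jacobson (⊥ : Ideal R)} := by
  ext x
  simp only [SetLike.mem_coe, Set.mem_setOf_eq]
  constructor
  · intro hx i
    rw [Ideal.mem_jacobson_iff]
    intro y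
    set Y : IncSubring n r hrefl htrans R :=
      ⟨Matrix.diagonal (fun _ => y), diag_mem hrefl htrans _⟩ with hY
    obtain ⟨Z, hZ⟩ := Ideal.mem_jacobson_iff.mp hx Y
    rw [Ideal.mem_bot] at hZ
    refine ⟨diagHom hrefl hanti htrans i Z, ?_⟩
    rw [Ideal.mem_bot]
    have h1 := congrArg (diagHom hrefl hanti htrans i) hZ
    rw [map_sub, map_add, map_mul, map_mul, map_one, map_zero] at h1
    have hYi : diagHom hrefl hanti htrans i Y = y := by
      show (Matrix.diagonal (fun _ => y) : Matrix (Fin n) (Fin n) R) i i = y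
      exact Matrix.diagonal_apply_eq _ i
    rw [hYi] at h1
    exact h1
  · intro hx
    rw [Ideal.mem_jacobson_iff]
    intro Y
    set N : IncSubring n r hrefl htrans R := Y * x + 1 with hN
    have hNd : ∀ i, IsUnit ((N : Matrix (Fin n) (Fin n) R) i i) := by
      intro i
      have h2 : diagHom hrefl hanti htrans i N =
          diagHom hrefl hanti htrans i Y * diagHom hrefl hanti htrans i x + 1 := by
        rw [hN, (diagHom hrefl hanti htrans i).map_add, (diagHom hrefl hanti htrans i).map_mul,
          (diagHom hrefl hanti htrans i).map_one]
      have h3 : (N : Matrix (Fin n) (Fin n) R) i i =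
          (Y : Matrix (Fin n) (Fin n) R) i i * (x : Matrix (Fin n) (Fin n) R) i i + 1 := h2
      rw [h3]
      exact isUnit_jacMul_add_one (hx i) _
    obtain ⟨v, hv⟩ := isUnit_of_diag hrefl htrans hanti N hNd
    refine ⟨(v⁻¹ : _ˣ), ?_⟩
    rw [Ideal.mem_bot]
    have h2 : (↑v⁻¹ : IncSubring n r hrefl htrans R) * N = 1 := by
      rw [← hv]; exact v.inv_mul
    rw [hN, mul_add, mul_one] at h2
    rw [mul_assoc, h2, sub_self]
end

section
/- Let R ≅ M_k(F) with F a field, k ≥ 1, and A = A_n(⪯,R) with n ≥ 2. A finite nonempty set S = {A_1,…,A_m} ⊆ A together with R·I_n generates A as a ring if and only if: (1) the n×m matrix Δ with entries Δ_{iα} = (A_α)_{ii} has no two identical rows; and (2) for each covering pair i ⋖ j, the vectors v = ((A_1)_{ii}−(A_1)_{jj},…,(A_m)_{ii}−(A_m)_{jj}) and w = ((A_1)_{ij},…,(A_m)_{ij}) in R^m are linearly independent over the field F. -/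
namespace Stmt10Aux

/-- strict chains of length `t` -/
def Chn {n : ℕ} (r : Fin n → Fin n → Prop) : ℕ → Fin n → Fin n → Prop
  | 0, p, q => p = q
  | (t+1), p, q => ∃ s, (r p s ∧ p ≠ s) ∧ Chn r t s q

/-- the `t`-th power layer of the "strictly ordered" part -/
def Jt (n : ℕ) (r : Fin n → Fin n → Prop) (R : Type*) [Ring R] (t : ℕ) :
    Set (Matrix (Fin n) (Fin n) R) :=
  {X | ∀ p q, ¬ Chn r t p q → X p q = 0}

section Chains

variable {n : ℕ} {r : Fin n → Fin n → Prop}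

lemma chn_one {p q : Fin n} : Chn r 1 p q ↔ r p q ∧ p ≠ q := by
  constructor
  · rintro ⟨s, hs, (rfl : s = q)⟩; exact hs
  · intro h; exact ⟨q, h, rfl⟩

lemma chn_concat : ∀ {a : ℕ} {b : ℕ} {p s q : Fin n},
    Chn r a p s → Chn r b s q → Chn r (a + b) p q
  | 0, b, p, s, q, h1, h2 => by
      cases h1; rw [Nat.zero_add]; exact h2
  | (t+1), b, p, s, q, h1, h2 => by
      obtain ⟨x, hx, hc⟩ := h1
      rw [Nat.succ_add]
      exact ⟨x, hx, chn_concat hc h2⟩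

variable (hanti : ∀ i j, r i j → r j i → i = j)
    (htrans : ∀ i j k, r i j → r j k → r i k)

include hanti htrans in
lemma chn_strict : ∀ {t : ℕ} {p q : Fin n}, Chn r (t+1) p q → r p q ∧ p ≠ q := by
  intro t
  induction t with
  | zero => intro p q h; exact chn_one.1 h
  | succ t ih =>
      rintro p q ⟨s, ⟨hps, hne⟩, hc⟩
      obtain ⟨hsq, hnsq⟩ := ih hc
      refine ⟨htrans _ _ _ hps hsq, ?_⟩
      rintro rfl
      exact hne (hanti _ _ hps hsq)

include hanti htrans in
lemma chn_pred : ∀ {t : ℕ} {p q : Fin n}, Chn r (t+2) p q → Chn r (t+1) p q := by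
  intro t
  induction t with
  | zero =>
      intro p q h
      exact chn_one.2 (chn_strict hanti htrans h)
  | succ t ih =>
      rintro p q ⟨s, hs, hc⟩
      exact ⟨s, hs, ih hc⟩

include hanti htrans in
lemma chn_down {a b : ℕ} (hb : 1 ≤ b) (hba : b ≤ a) {p q : Fin n}
    (h : Chn r a p q) : Chn r b p q := by
  induction a, hba using Nat.le_induction with
  | base => exact h
  | succ a hba ih =>
      obtain ⟨c, rfl⟩ := Nat.exists_eq_add_of_le (hb.trans hba)
      have h2 : Chn r (c + 2) p q := by rwa [show 1 + c + 1 = c + 2 by omega] at h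
      have h1 : Chn r (1 + c) p q := by
        rw [Nat.add_comm]; exact chn_pred hanti htrans h2
      exact ih h1

include hanti htrans in
lemma chn_lt {t : ℕ} {p q : Fin n} (h : Chn r t p q) : t < n := by
  have key : ∀ (t : ℕ) (p q : Fin n), Chn r t p q →
      ∃ l : List (Fin n), l.Chain' (fun a b => r a b ∧ a ≠ b) ∧
        l.length = t + 1 ∧ l.head? = some p := by
    intro t
    induction t with
    | zero => rintro p q rfl; exact ⟨[p], List.isChain_singleton p, rfl, rfl⟩
    | succ t ih =>
        rintro p q ⟨s, hs, hc⟩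
        obtain ⟨l, hl, hlen, hhead⟩ := ih s q hc
        refine ⟨p :: l, List.isChain_cons.2 ⟨?_, hl⟩, by simp [hlen], rfl⟩
        intro y hy
        rw [hhead] at hy
        cases hy
        exact hs
  obtain ⟨l, hl, hlen, -⟩ := key t p q h
  letI : IsTrans (Fin n) (fun a b => r a b ∧ a ≠ b) := by
    constructor
    rintro a b c ⟨hab, hne⟩ ⟨hbc, hne'⟩
    refine ⟨htrans _ _ _ hab hbc, ?_⟩
    rintro rfl
    exact hne (hanti _ _ hab hbc)
  have hpw := List.isChain_iff_pairwise.1 hl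
  have hnd : l.Nodup := hpw.imp (fun h => h.2)
  have := hnd.length_le_card
  simpa [hlen, Fintype.card_fin] using this

variable {R : Type*} [Ring R]

lemma jt_add {t : ℕ} {X Y : Matrix (Fin n) (Fin n) R} (hX : X ∈ Jt n r R t)
    (hY : Y ∈ Jt n r R t) : X + Y ∈ Jt n r R t := fun p q h => by
  simp [Matrix.add_apply, hX p q h, hY p q h]

lemma jt_sub {t : ℕ} {X Y : Matrix (Fin n) (Fin n) R} (hX : X ∈ Jt n r R t)
    (hY : Y ∈ Jt n r R t) : X - Y ∈ Jt n r R t := fun p q h => by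
  simp [Matrix.sub_apply, hX p q h, hY p q h]

lemma jt_mul {a b : ℕ} {X Y : Matrix (Fin n) (Fin n) R} (hX : X ∈ Jt n r R a)
    (hY : Y ∈ Jt n r R b) : X * Y ∈ Jt n r R (a + b) := by
  intro p q h
  rw [Matrix.mul_apply]
  refine Finset.sum_eq_zero fun s _ => ?_
  by_cases h1 : Chn r a p s
  · by_cases h2 : Chn r b s q
    · exact absurd (chn_concat h1 h2) h
    · rw [hY s q h2, mul_zero]
  · rw [hX p s h1, zero_mul]

include hanti htrans in
lemma jt_eq_zero {t : ℕ} (ht : n ≤ t) {X : Matrix (Fin n) (Fin n) R}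
    (hX : X ∈ Jt n r R t) : X = 0 := by
  ext p q
  rw [Matrix.zero_apply]
  exact hX p q (fun h => absurd (chn_lt hanti htrans h) (by omega))

include hanti htrans in
lemma jt_mono {a b : ℕ} (hb : 1 ≤ b) (hba : b ≤ a) {X : Matrix (Fin n) (Fin n) R}
    (hX : X ∈ Jt n r R a) : X ∈ Jt n r R b := by
  intro p q h
  exact hX p q (fun hc => h (chn_down hanti htrans hb hba hc))

lemma jt_stdBasis {t : ℕ} {p q : Fin n} (h : Chn r t p q) (c : R) :
    Matrix.single p q c ∈ Jt n r R t := by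
  intro p' q' h'
  have hne : ¬ (p = p' ∧ q = q') := by rintro ⟨rfl, rfl⟩; exact h' h
  show Matrix.single p q c p' q' = 0
  exact Matrix.single_apply_of_ne p q c p' q' hne

lemma jt_map {t : ℕ} {X : Matrix (Fin n) (Fin n) R} (hX : X ∈ Jt n r R t)
    {S : Type*} [Ring S] (φ : R → S) (h0 : φ 0 = 0) : X.map φ ∈ Jt n r S t := by
  intro p q h
  rw [Matrix.map_apply, hX p q h, h0]

include hanti in
lemma inc_diag_mul (X Y : Matrix (Fin n) (Fin n) R)
    (hX : X ∈ IncSet n r R) (hY : Y ∈ IncSet n r R) (p : Fin n) :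
    (X * Y) p p = X p p * Y p p := by
  rw [Matrix.mul_apply]
  refine Finset.sum_eq_single p (fun s _ hs => ?_) (by simp)
  by_cases h1 : r p s
  · have h2 : ¬ r s p := fun h2 => hs (hanti _ _ h2 h1)
    rw [hY s p h2, mul_zero]
  · rw [hX p s h1, zero_mul]

lemma inc_cover_mul {i j : Fin n} (hcov : Covers r i j)
    (X Y : Matrix (Fin n) (Fin n) R)
    (hX : X ∈ IncSet n r R) (hY : Y ∈ IncSet n r R) :
    (X * Y) i j = X i i * Y i j + X i j * Y j j := by
  obtain ⟨hij, hne, hnomid⟩ := hcov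
  rw [Matrix.mul_apply]
  rw [show (∑ s, X i s * Y s j) = ∑ s ∈ ({i, j} : Finset (Fin n)), X i s * Y s j from
    (Finset.sum_subset (Finset.subset_univ _) ?_).symm, Finset.sum_pair hne]
  intro s _ hs
  simp only [Finset.mem_insert, Finset.mem_singleton, not_or] at hs
  by_cases h1 : r i s
  · by_cases h2 : r s j
    · exact absurd ⟨⟨h1, fun h => hs.1 h.symm⟩, h2, hs.2⟩ (hnomid s)
    · rw [hY s j h2, mul_zero]
  · rw [hX i s h1, zero_mul]

end Chains

abbrev MF (k : ℕ) (F : Type*) [Field F] := Matrix (Fin k) (Fin k) F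

section MatrixField

variable {n k m : ℕ} {F : Type*} [Field F]
variable {r : Fin n → Fin n → Prop} (A : Fin m → Matrix (Fin n) (Fin n) (MF k F))

def Bcl : Subring (Matrix (Fin n) (Fin n) (MF k F)) :=
  Subring.closure (Set.range A ∪ Set.range fun c : MF k F => Matrix.scalar (Fin n) c)

lemma A_mem_bcl (α : Fin m) : A α ∈ Bcl A :=
  Subring.subset_closure (Or.inl ⟨α, rfl⟩)

lemma scalar_mem_bcl (c : MF k F) : Matrix.scalar (Fin n) c ∈ Bcl A :=
  Subring.subset_closure (Or.inr ⟨c, rfl⟩)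

lemma smul_mem_bcl (c : F) {X : Matrix (Fin n) (Fin n) (MF k F)} (hX : X ∈ Bcl A) :
    c • X ∈ Bcl A := by
  have h : c • X = Matrix.scalar (Fin n) (c • (1 : MF k F)) * X := by
    ext p q
    rw [Matrix.smul_apply, Matrix.scalar_apply, Matrix.diagonal_mul, smul_mul_assoc, one_mul]
  rw [h]; exact mul_mem (scalar_mem_bcl A _) hX

variable (hrefl : ∀ i, r i i) (hanti : ∀ i j, r i j → r j i → i = j)
    (htrans : ∀ i j k, r i j → r j k → r i k)
    (hA : ∀ α, A α ∈ IncSet n r (MF k F))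

include hrefl htrans hA in
lemma bcl_subset_inc {X : Matrix (Fin n) (Fin n) (MF k F)} (hX : X ∈ Bcl A) :
    X ∈ IncSet n r (MF k F) := by
  have hle : Bcl A ≤ IncSubring n r hrefl htrans (MF k F) := by
    apply Subring.closure_le.2
    rintro Y (⟨α, rfl⟩ | ⟨c, rfl⟩)
    · exact hA α
    · intro p q h
      have hpq : p ≠ q := fun e => h (e ▸ hrefl p)
      simp [Matrix.scalar_apply, Matrix.diagonal_apply_ne _ hpq]
  exact hle hX

lemma map_mem_bcl (φ : MF k F →ₗ[F] MF k F) {X : Matrix (Fin n) (Fin n) (MF k F)}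
    (hX : X ∈ Bcl A) : X.map φ ∈ Bcl A := by
  classical
  have h1 : ∀ (a b c d : Fin k) (x : MF k F),
      Matrix.single c a (1:F) * x * Matrix.single b d 1
        = x a b • Matrix.single c d (1:F) := by
    intro a b c d x
    ext p q
    rcases eq_or_ne q d with rfl | hq
    · rw [Matrix.mul_single_apply_same]
      rcases eq_or_ne p c with rfl | hp
      · rw [Matrix.single_mul_apply_same, Matrix.smul_apply,
          Matrix.single_apply_same, one_mul, mul_one, smul_eq_mul, mul_one]
      · rw [Matrix.single_mul_apply_of_ne _ _ _ _ _ hp, Matrix.smul_apply,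
          Matrix.single_apply_of_ne c q (1:F) p q (fun h => hp h.1.symm), smul_zero,
          zero_mul]
    · rw [Matrix.mul_single_apply_of_ne _ _ _ _ _ hq, Matrix.smul_apply,
        Matrix.single_apply_of_ne c d (1:F) p q (fun h => hq h.2.symm), smul_zero]
  have hsum : ∀ x : MF k F,
      x = ∑ a : Fin k, ∑ b : Fin k, x a b • Matrix.single a b (1:F) := by
    intro x
    conv_lhs => rw [Matrix.matrix_eq_sum_single x]
    refine Finset.sum_congr rfl fun a _ => Finset.sum_congr rfl fun b _ => ?_
    rw [Matrix.smul_single, smul_eq_mul, mul_one]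
  have key : ∀ x : MF k F, φ x = ∑ a : Fin k, ∑ b : Fin k, ∑ c : Fin k, ∑ d : Fin k,
      (φ (Matrix.single a b 1)) c d •
        (Matrix.single c a (1:F) * x * Matrix.single b d 1) := by
    intro x
    have hinner : ∀ a b : Fin k, (∑ c : Fin k, ∑ d : Fin k,
        (φ (Matrix.single a b 1)) c d •
          (Matrix.single c a (1:F) * x * Matrix.single b d 1))
        = x a b • φ (Matrix.single a b 1) := by
      intro a b
      calc (∑ c : Fin k, ∑ d : Fin k, (φ (Matrix.single a b 1)) c d •
            (Matrix.single c a (1:F) * x * Matrix.single b d 1))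
          = ∑ c : Fin k, ∑ d : Fin k, x a b • ((φ (Matrix.single a b 1)) c d •
            Matrix.single c d (1:F)) := by
            refine Finset.sum_congr rfl fun c _ => Finset.sum_congr rfl fun d _ => ?_
            rw [h1, smul_comm]
        _ = x a b • ∑ c : Fin k, ∑ d : Fin k, ((φ (Matrix.single a b 1)) c d •
            Matrix.single c d (1:F)) := by
            rw [Finset.smul_sum]
            exact Finset.sum_congr rfl fun c _ => (Finset.smul_sum).symm
        _ = x a b • φ (Matrix.single a b 1) := by
            rw [← hsum (φ (Matrix.single a b 1))]
    rw [Finset.sum_congr rfl fun a _ => Finset.sum_congr rfl fun b _ => hinner a b]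
    conv_lhs => rw [hsum x]
    rw [map_sum]
    refine Finset.sum_congr rfl fun a _ => ?_
    rw [map_sum]
    refine Finset.sum_congr rfl fun b _ => ?_
    rw [map_smul]
  have hmat : X.map φ = ∑ a : Fin k, ∑ b : Fin k, ∑ c : Fin k, ∑ d : Fin k,
      (φ (Matrix.single a b 1)) c d •
        (Matrix.scalar (Fin n) (Matrix.single c a (1:F)) * X *
          Matrix.scalar (Fin n) (Matrix.single b d 1)) := by
    ext p q : 2
    rw [Matrix.map_apply, key (X p q)]
    simp only [Matrix.sum_apply, Matrix.smul_apply]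
    refine Finset.sum_congr rfl fun a _ => Finset.sum_congr rfl fun b _ =>
      Finset.sum_congr rfl fun c _ => Finset.sum_congr rfl fun d _ => ?_
    congr 1
    rw [Matrix.scalar_apply, Matrix.scalar_apply, Matrix.mul_diagonal, Matrix.diagonal_mul]
  rw [hmat]
  refine Subring.sum_mem _ fun a _ => Subring.sum_mem _ fun b _ =>
    Subring.sum_mem _ fun c _ => Subring.sum_mem _ fun d _ => ?_
  exact smul_mem_bcl A _ (mul_mem (mul_mem (scalar_mem_bcl A _) hX) (scalar_mem_bcl A _))

lemma exists_lin {x : MF k F} (hx : x ≠ 0) (c : MF k F) :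
    ∃ φ : MF k F →ₗ[F] MF k F, φ x = c := by
  have hex : ∃ a b : Fin k, x a b ≠ 0 := by
    by_contra h
    push_neg at h
    exact hx (Matrix.ext fun a b => (h a b).trans rfl)
  obtain ⟨a, b, hab⟩ := hex
  refine ⟨{ toFun := fun y => y a b • ((x a b)⁻¹ • c)
            map_add' := fun y z => by simp [Matrix.add_apply, add_smul]
            map_smul' := fun s y => by
              simp [Matrix.smul_apply, smul_eq_mul, mul_smul] }, ?_⟩
  simp only [LinearMap.coe_mk, AddHom.coe_mk]
  rw [smul_smul, mul_inv_cancel₀ hab, one_smul]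

def entryLin (k : ℕ) (F : Type*) [Field F] (s t : Fin k) : MF k F →ₗ[F] MF k F where
  toFun := fun y => y s t • (1 : MF k F)
  map_add' := fun y z => by simp [Matrix.add_apply, add_smul]
  map_smul' := fun c y => by simp [Matrix.smul_apply, smul_eq_mul, mul_smul]

include hrefl hanti htrans hA in
lemma exists_diag_unit (h1 : ∀ i j : Fin n, i ≠ j → ∃ α, A α i i ≠ A α j j) (i : Fin n) :
    ∃ X ∈ Bcl A, ∀ p, X p p = if p = i then 1 else 0 := by
  classical
  have hpair : ∀ j : Fin n, j ≠ i → ∃ h ∈ Bcl A, h i i = 1 ∧ h j j = 0 := by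
    intro j hji
    obtain ⟨α, hα⟩ := h1 i j (Ne.symm hji)
    have hex : ∃ s t : Fin k, (A α i i) s t ≠ (A α j j) s t := by
      by_contra h
      push_neg at h
      exact hα (Matrix.ext fun s t => h s t)
    obtain ⟨s, t, hst⟩ := hex
    have hYmem : (A α).map (entryLin k F s t) ∈ Bcl A := map_mem_bcl A _ (A_mem_bcl A α)
    refine ⟨(((A α i i) s t - (A α j j) s t)⁻¹ : F) •
      ((A α).map (entryLin k F s t) - Matrix.scalar (Fin n) (((A α j j) s t : F) • 1)), ?_, ?_, ?_⟩
    · exact smul_mem_bcl A _ (sub_mem hYmem (scalar_mem_bcl A _))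
    · rw [Matrix.smul_apply, Matrix.sub_apply, Matrix.map_apply]
      show (_ : F)⁻¹ • ((A α i i) s t • (1 : MF k F) -
        (Matrix.scalar (Fin n) ((A α j j) s t • 1)) i i) = 1
      rw [Matrix.scalar_apply, Matrix.diagonal_apply_eq, ← sub_smul, smul_smul,
        inv_mul_cancel₀ (sub_ne_zero.2 hst), one_smul]
    · rw [Matrix.smul_apply, Matrix.sub_apply, Matrix.map_apply]
      show (_ : F)⁻¹ • ((A α j j) s t • (1 : MF k F) -
        (Matrix.scalar (Fin n) ((A α j j) s t • 1)) j j) = 0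
      rw [Matrix.scalar_apply, Matrix.diagonal_apply_eq, sub_self, smul_zero]
  have main : ∀ s : Finset (Fin n), i ∉ s → ∃ X ∈ Bcl A, X i i = 1 ∧ ∀ j ∈ s, X j j = 0 := by
    intro s
    induction s using Finset.induction_on with
    | empty =>
        intro _
        exact ⟨1, one_mem _, by simp [Matrix.one_apply], fun j hj => absurd hj (by simp)⟩
    | @insert b s hb ih =>
        intro hins
        have hib : i ≠ b := fun e => hins (e ▸ Finset.mem_insert_self b s)
        have his : i ∉ s := fun h => hins (Finset.mem_insert_of_mem h)
        obtain ⟨X, hXmem, hXi, hXs⟩ := ih his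
        obtain ⟨h, hhmem, hhi, hhb⟩ := hpair b (Ne.symm hib)
        refine ⟨X * h, mul_mem hXmem hhmem, ?_, ?_⟩
        · rw [inc_diag_mul hanti X h (bcl_subset_inc A hrefl htrans hA hXmem)
            (bcl_subset_inc A hrefl htrans hA hhmem), hXi, hhi, one_mul]
        · intro j hj
          rw [inc_diag_mul hanti X h (bcl_subset_inc A hrefl htrans hA hXmem)
            (bcl_subset_inc A hrefl htrans hA hhmem)]
          rcases Finset.mem_insert.1 hj with rfl | hj
          · rw [hhb, mul_zero]
          · rw [hXs j hj, zero_mul]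
  obtain ⟨X, hXmem, hXi, hXoff⟩ := main (Finset.univ.erase i) (Finset.notMem_erase i _)
  refine ⟨X, hXmem, fun p => ?_⟩
  rcases eq_or_ne p i with rfl | hp
  · rw [if_pos rfl, hXi]
  · rw [if_neg hp, hXoff p (Finset.mem_erase.2 ⟨hp, Finset.mem_univ p⟩)]

lemma chn_two {n : ℕ} {r : Fin n → Fin n → Prop} {p q s : Fin n}
    (h1 : r p s ∧ p ≠ s) (h2 : r s q ∧ s ≠ q) : Chn r 2 p q :=
  ⟨s, h1, chn_one.2 h2⟩

lemma chn_three {n : ℕ} {r : Fin n → Fin n → Prop} {p q s t : Fin n}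
    (h1 : r p s ∧ p ≠ s) (h2 : r s t ∧ s ≠ t) (h3 : r t q ∧ t ≠ q) : Chn r 3 p q :=
  ⟨s, h1, ⟨t, h2, chn_one.2 h3⟩⟩

include hrefl hanti htrans hA in
lemma cover_layer (h1 : ∀ i j : Fin n, i ≠ j → ∃ α, A α i i ≠ A α j j)
    {i j : Fin n} (hcov : Covers r i j)
    (hli : LinearIndependent F ![fun α => A α i i - A α j j, fun α : Fin m => A α i j])
    (c : MF k F) :
    ∃ W ∈ Jt n r (MF k F) 2, Matrix.single i j c + W ∈ Bcl A := by
  classical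
  obtain ⟨Xi, hXi, hXid⟩ := exists_diag_unit A hrefl hanti htrans hA h1 i
  obtain ⟨Xj, hXj, hXjd⟩ := exists_diag_unit A hrefl hanti htrans hA h1 j
  have hXiI := bcl_subset_inc A hrefl htrans hA hXi
  have hXjI := bcl_subset_inc A hrefl htrans hA hXj
  have hij : i ≠ j := hcov.2.1
  have hXidi : Xi i i = 1 := by rw [hXid i, if_pos rfl]
  have hXjdj : Xj j j = 1 := by rw [hXjd j, if_pos rfl]
  have hXjdi : Xj i i = 0 := by rw [hXjd i, if_neg hij]
  set u := Xj i j with hu_def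
  set z := Xi i j with hz_def
  have hsand : ∀ Z : Matrix (Fin n) (Fin n) (MF k F), Z ∈ Bcl A → (∀ p, Z p p = 0) →
      (Xi * Z * Xj ∈ Bcl A) ∧ ((Xi * Z * Xj) i j = Z i j) ∧
        (∀ p q, ¬ (p = i ∧ q = j) → ¬ Chn r 2 p q → (Xi * Z * Xj) p q = 0) := by
    intro Z hZmem hZd
    have hZI := bcl_subset_inc A hrefl htrans hA hZmem
    have hXZI : Xi * Z ∈ IncSet n r (MF k F) :=
      (IncSubring n r hrefl htrans (MF k F)).mul_mem hXiI hZI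
    refine ⟨mul_mem (mul_mem hXi hZmem) hXj, ?_, ?_⟩
    · rw [inc_cover_mul hcov _ _ hXZI hXjI, inc_cover_mul hcov _ _ hXiI hZI,
        inc_diag_mul hanti _ _ hXiI hZI, hXidi, hXjdj, hZd i, hZd j]
      simp
    · intro p q hpq hnch
      rw [Matrix.mul_apply]
      refine Finset.sum_eq_zero fun t _ => ?_
      rw [Matrix.mul_apply, Finset.sum_mul]
      refine Finset.sum_eq_zero fun s _ => ?_
      by_cases hps : r p s
      · by_cases hst : r s t
        · rcases eq_or_ne s t with rfl | hsnet
          · rw [hZd s, mul_zero, zero_mul]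
          · by_cases htq : r t q
            · rcases eq_or_ne p s with rfl | hpnes
              · rcases eq_or_ne t q with rfl | htneq
                · rcases eq_or_ne p i with rfl | hpi
                  · rcases eq_or_ne t j with rfl | hqj
                    · exact absurd ⟨rfl, rfl⟩ hpq
                    · rw [hXjd t, if_neg hqj, mul_zero]
                  · rw [hXid p, if_neg hpi, zero_mul, zero_mul]
                · exact absurd (chn_two ⟨hst, hsnet⟩ ⟨htq, htneq⟩) hnch
              · rcases eq_or_ne t q with rfl | htneq
                · exact absurd (chn_two ⟨hps, hpnes⟩ ⟨hst, hsnet⟩) hnch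
                · exact absurd (chn_pred hanti htrans
                    (chn_three ⟨hps, hpnes⟩ ⟨hst, hsnet⟩ ⟨htq, htneq⟩)) hnch
            · rw [hXjI t q htq, mul_zero]
        · rw [hZI s t hst, mul_zero, zero_mul]
      · rw [hXiI p s hps, zero_mul, zero_mul]
  by_cases hzero : ∀ Z ∈ Bcl A, (∀ p, Z p p = 0) → Z i j = 0
  · exfalso
    -- first candidate : Xi * Xj
    have hd1 : ∀ p, (Xi * Xj) p p = 0 := by
      intro p
      rw [inc_diag_mul hanti _ _ hXiI hXjI]
      rcases eq_or_ne p i with rfl | hpi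
      · rw [hXjdi, mul_zero]
      · rw [hXid p, if_neg hpi, zero_mul]
    have hu : u + z = 0 := by
      have := hzero _ (mul_mem hXi hXj) hd1
      rw [inc_cover_mul hcov _ _ hXiI hXjI, hXidi, hXjdj, one_mul, mul_one] at this
      exact this
    have hz : z = -u := by
      rw [← neg_eq_of_add_eq_zero_right hu]
    -- second family : Xi * (scalar c' * Xj)
    have hcomm : ∀ c' : MF k F, c' * u + z * c' = 0 := by
      intro c'
      have hmemc : Matrix.scalar (Fin n) c' * Xj ∈ Bcl A :=
        mul_mem (scalar_mem_bcl A c') hXj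
      have hIc : Matrix.scalar (Fin n) c' * Xj ∈ IncSet n r (MF k F) :=
        bcl_subset_inc A hrefl htrans hA hmemc
      have hdc : ∀ p, (Xi * (Matrix.scalar (Fin n) c' * Xj)) p p = 0 := by
        intro p
        rw [inc_diag_mul hanti _ _ hXiI hIc, Matrix.scalar_apply, Matrix.diagonal_mul]
        rcases eq_or_ne p i with rfl | hpi
        · rw [hXjdi, mul_zero, mul_zero]
        · rw [hXid p, if_neg hpi, zero_mul]
      have := hzero _ (mul_mem hXi hmemc) hdc
      rw [inc_cover_mul hcov _ _ hXiI hIc, Matrix.scalar_apply, Matrix.diagonal_mul,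
        Matrix.diagonal_mul, hXidi, hXjdj, one_mul, mul_one] at this
      exact this
    have hucomm : ∀ c' : MF k F, Commute c' u := by
      intro c'
      have := hcomm c'
      rw [hz] at this
      have h2 : c' * u - u * c' = 0 := by
        calc c' * u - u * c' = c' * u + -u * c' := by rw [neg_mul]; abel
        _ = 0 := this
      exact sub_eq_zero.1 h2
    obtain ⟨lam, hlam⟩ := Matrix.mem_range_scalar_of_commute_single
      (M := u) (fun a b _ => hucomm _)
    have hsc : u = lam • (1 : MF k F) := by
      rw [← hlam]
      ext a b
      by_cases hab : a = b <;>
        simp [Matrix.scalar_apply, Matrix.one_apply, Matrix.diagonal, hab]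
    -- third family : Xi * (A α * Xj)
    have hYα : ∀ α, A α i i * u + A α i j + z * A α j j = 0 := by
      intro α
      have hmemα : A α * Xj ∈ Bcl A := mul_mem (A_mem_bcl A α) hXj
      have hIα : A α * Xj ∈ IncSet n r (MF k F) := bcl_subset_inc A hrefl htrans hA hmemα
      have hdα : ∀ p, (Xi * (A α * Xj)) p p = 0 := by
        intro p
        rw [inc_diag_mul hanti _ _ hXiI hIα, inc_diag_mul hanti _ _ (hA α) hXjI]
        rcases eq_or_ne p i with rfl | hpi
        · rw [hXjdi, mul_zero, mul_zero]
        · rw [hXid p, if_neg hpi, zero_mul]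
      have := hzero _ (mul_mem hXi hmemα) hdα
      rw [inc_cover_mul hcov _ _ hXiI hIα, inc_cover_mul hcov _ _ (hA α) hXjI,
        inc_diag_mul hanti _ _ (hA α) hXjI, hXidi, hXjdj, one_mul, mul_one, mul_one] at this
      exact this
    rw [LinearIndependent.pair_iff] at hli
    refine one_ne_zero ((hli lam 1 ?_).2)
    funext α
    have e1 : A α i i * u = lam • A α i i := by rw [hsc, mul_smul_comm, mul_one]
    have e2 : z * A α j j = -(lam • A α j j) := by
      rw [hz, hsc, neg_mul, smul_mul_assoc, one_mul]
    show lam • (A α i i - A α j j) + (1:F) • (A α i j) = 0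
    rw [one_smul, smul_sub]
    calc lam • A α i i - lam • A α j j + A α i j
        = A α i i * u + A α i j + z * A α j j := by rw [e1, e2]; abel
      _ = 0 := hYα α
  · push_neg at hzero
    obtain ⟨Z, hZmem, hZd, hZne⟩ := hzero
    obtain ⟨hmem', hent, hoff⟩ := hsand Z hZmem hZd
    obtain ⟨φ, hφ⟩ := exists_lin hZne c
    have hW0 : Xi * Z * Xj - Matrix.single i j (Z i j) ∈ Jt n r (MF k F) 2 := by
      intro p q hpq
      rw [Matrix.sub_apply]
      by_cases hl : p = i ∧ q = j
      · obtain ⟨rfl, rfl⟩ := hl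
        rw [hent, Matrix.single_apply_same, sub_self]
      · rw [hoff p q hl hpq,
          Matrix.single_apply_of_ne i j _ p q (fun h => hl ⟨h.1.symm, h.2.symm⟩),
          sub_zero]
    refine ⟨(Xi * Z * Xj - Matrix.single i j (Z i j)).map φ,
      jt_map hW0 φ (map_zero φ), ?_⟩
    have heq : Matrix.single i j c +
        (Xi * Z * Xj - Matrix.single i j (Z i j)).map φ = (Xi * Z * Xj).map φ := by
      ext p q : 2
      rw [Matrix.add_apply, Matrix.map_apply, Matrix.map_apply, Matrix.sub_apply, map_sub]
      by_cases hl : i = p ∧ j = q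
      · obtain ⟨rfl, rfl⟩ := hl
        rw [Matrix.single_apply_same, Matrix.single_apply_same, hφ]
        rw [add_comm c, sub_add_cancel]
      · rw [Matrix.single_apply_of_ne _ _ _ _ _ hl,
          Matrix.single_apply_of_ne _ _ _ _ _ hl, map_zero]
        rw [sub_zero, zero_add]
    rw [heq]
    exact map_mem_bcl A φ hmem'

include hrefl hanti htrans hA in
lemma jt_subset_bcl (h1 : ∀ i j : Fin n, i ≠ j → ∃ α, A α i i ≠ A α j j)
    (h2 : ∀ i j : Fin n, Covers r i j →
      LinearIndependent F ![fun α => A α i i - A α j j, fun α : Fin m => A α i j])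
    {X : Matrix (Fin n) (Fin n) (MF k F)} (hX : X ∈ Jt n r (MF k F) 1) : X ∈ Bcl A := by
  classical
  -- maximal chains factor through covers
  have hchain : ∀ (t : ℕ) (p q : Fin n), Chn r (t+1) p q → ¬ Chn r (t+2) p q →
      ∀ c : MF k F, ∃ W ∈ Jt n r (MF k F) (t+2), Matrix.single p q c + W ∈ Bcl A := by
    intro t
    induction t with
    | zero =>
        intro p q hc hnc c
        have hcov : Covers r p q := by
          obtain ⟨hpq, hne⟩ := chn_one.1 hc
          exact ⟨hpq, hne, fun w hw => hnc (chn_two hw.1 hw.2)⟩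
        exact cover_layer A hrefl hanti htrans hA h1 hcov (h2 p q hcov) c
    | succ t ih =>
        intro p q hc hnc c
        obtain ⟨s, hps, hcs⟩ := hc
        have hcovps : Covers r p s := by
          refine ⟨hps.1, hps.2, fun w hw => hnc ?_⟩
          exact ⟨w, hw.1, ⟨s, hw.2, hcs⟩⟩
        have hncs : ¬ Chn r (t+2) s q := fun h => hnc ⟨s, hps, h⟩
        obtain ⟨W₁, hW₁, hBW₁⟩ := ih s q hcs hncs 1
        obtain ⟨W₀, hW₀, hBW₀⟩ :=
          cover_layer A hrefl hanti htrans hA h1 hcovps (h2 p s hcovps) c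
        have hsb1 : Matrix.single p s c ∈ Jt n r (MF k F) 1 :=
          jt_stdBasis (chn_one.2 hps) c
        have hsb2 : Matrix.single s q (1 : MF k F) ∈ Jt n r (MF k F) (t+1) :=
          jt_stdBasis hcs 1
        refine ⟨Matrix.single p s c * W₁ + W₀ * Matrix.single s q 1
          + W₀ * W₁, ?_, ?_⟩
        · refine jt_add (jt_add ?_ ?_) ?_
          · exact jt_mono hanti htrans (by omega) (by omega) (jt_mul hsb1 hW₁)
          · exact jt_mono hanti htrans (by omega) (by omega) (jt_mul hW₀ hsb2)
          · exact jt_mono hanti htrans (by omega) (by omega) (jt_mul hW₀ hW₁)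
        · have hexp : Matrix.single p q c +
              (Matrix.single p s c * W₁ + W₀ * Matrix.single s q 1 + W₀ * W₁)
              = (Matrix.single p s c + W₀) * (Matrix.single s q 1 + W₁) := by
            rw [add_mul, mul_add, mul_add, Matrix.single_mul_single_same, mul_one]
            abel
          rw [hexp]
          exact mul_mem hBW₀ hBW₁
  -- downward induction
  have main : ∀ (d t : ℕ), 1 ≤ t → n ≤ t + d →
      ∀ Y ∈ Jt n r (MF k F) t, Y ∈ Bcl A := by
    intro d
    induction d with
    | zero =>
        intro t ht hn Y hY
        rw [jt_eq_zero hanti htrans (by omega) hY]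
        exact zero_mem _
    | succ d ih =>
        intro t ht hn Y hY
        have hstd : ∀ p q : Fin n, Chn r t p q → ∀ c : MF k F,
            Matrix.single p q c ∈ Bcl A := by
          intro p q hc c
          by_cases hc1 : Chn r (t+1) p q
          · exact ih (t+1) (by omega) (by omega) _ (jt_stdBasis hc1 c)
          · obtain ⟨t', rfl⟩ : ∃ t', t = t' + 1 := ⟨t - 1, by omega⟩
            obtain ⟨W, hW, hB⟩ := hchain t' p q hc hc1 c
            have hWB : W ∈ Bcl A := ih (t'+2) (by omega) (by omega) _ hW
            have := sub_mem hB hWB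
            simpa using this
        have hdecomp := Matrix.matrix_eq_sum_single Y
        rw [hdecomp]
        refine Subring.sum_mem _ fun p _ => Subring.sum_mem _ fun q _ => ?_
        by_cases hc : Chn r t p q
        · exact hstd p q hc _
        · rw [hY p q hc, Matrix.single_zero]
          exact zero_mem _
  exact main n 1 le_rfl (by omega) X hX

include hrefl hanti htrans hA in
lemma backward (h1 : ∀ i j : Fin n, i ≠ j → ∃ α, A α i i ≠ A α j j)
    (h2 : ∀ i j : Fin n, Covers r i j →
      LinearIndependent F ![fun α => A α i i - A α j j, fun α : Fin m => A α i j]) :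
    (Bcl A : Set (Matrix (Fin n) (Fin n) (MF k F))) = IncSet n r (MF k F) := by
  classical
  apply Set.Subset.antisymm
  · intro X hX
    exact bcl_subset_inc A hrefl htrans hA hX
  · intro X hX
    have hdiag : ∀ p : Fin n, Matrix.single p p (1 : MF k F) ∈ Bcl A := by
      intro p
      obtain ⟨Y, hYmem, hYd⟩ := exists_diag_unit A hrefl hanti htrans hA h1 p
      have hJ : Y - Matrix.single p p 1 ∈ Jt n r (MF k F) 1 := by
        intro p' q' h'
        rw [Matrix.sub_apply]
        rcases eq_or_ne p' q' with rfl | hne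
        · rw [hYd p']
          by_cases hp : p' = p
          · subst hp
            rw [if_pos rfl, Matrix.single_apply_same, sub_self]
          · rw [if_neg hp,
              Matrix.single_apply_of_ne p p 1 p' p' (fun h => hp h.1.symm), sub_zero]
        · have hnr : ¬ r p' q' := fun hr => h' (chn_one.2 ⟨hr, hne⟩)
          rw [bcl_subset_inc A hrefl htrans hA hYmem p' q' hnr,
            Matrix.single_apply_of_ne p p 1 p' q'
              (fun h => hne (h.1.symm.trans h.2)), sub_zero]
      have hJB := jt_subset_bcl A hrefl hanti htrans hA h1 h2 hJ
      have := sub_mem hYmem hJB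
      simpa using this
    rw [Matrix.matrix_eq_sum_single X]
    refine Subring.sum_mem _ fun p _ => Subring.sum_mem _ fun q _ => ?_
    by_cases hr : r p q
    · rcases eq_or_ne p q with rfl | hne
      · have hsc : Matrix.single p p (X p p) =
            Matrix.scalar (Fin n) (X p p) * Matrix.single p p 1 := by
          ext p' q' : 2
          rw [Matrix.scalar_apply, Matrix.diagonal_mul]
          by_cases h : p = p' ∧ p = q'
          · obtain ⟨h1', h2'⟩ := h
            subst h1'; subst h2'
            rw [Matrix.single_apply_same, Matrix.single_apply_same, mul_one]
          · rw [Matrix.single_apply_of_ne _ _ _ _ _ h,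
              Matrix.single_apply_of_ne _ _ _ _ _ h, mul_zero]
        rw [hsc]
        exact mul_mem (scalar_mem_bcl A _) (hdiag p)
      · exact jt_subset_bcl A hrefl hanti htrans hA h1 h2
          (jt_stdBasis (chn_one.2 ⟨hr, hne⟩) (X p q))
    · rw [hX p q hr, Matrix.single_zero]
      exact zero_mem _

def diagEqSub (hrefl : ∀ i, r i i) (hanti : ∀ i j, r i j → r j i → i = j)
    (htrans : ∀ i j k, r i j → r j k → r i k) (i j : Fin n) :
    Subring (Matrix (Fin n) (Fin n) (MF k F)) where
  carrier := {X | X ∈ IncSet n r (MF k F) ∧ X i i = X j j}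
  zero_mem' := ⟨fun _ _ _ => rfl, rfl⟩
  one_mem' := ⟨(IncSubring n r hrefl htrans (MF k F)).one_mem, by
    rw [Matrix.one_apply_eq, Matrix.one_apply_eq]⟩
  add_mem' := fun {a b} ha hb =>
    ⟨(IncSubring n r hrefl htrans (MF k F)).add_mem ha.1 hb.1, by
      rw [Matrix.add_apply, Matrix.add_apply, ha.2, hb.2]⟩
  neg_mem' := fun {a} ha =>
    ⟨(IncSubring n r hrefl htrans (MF k F)).neg_mem ha.1, by
      rw [Matrix.neg_apply, Matrix.neg_apply, ha.2]⟩
  mul_mem' := fun {a b} ha hb =>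
    ⟨(IncSubring n r hrefl htrans (MF k F)).mul_mem ha.1 hb.1, by
      rw [inc_diag_mul hanti _ _ ha.1 hb.1, inc_diag_mul hanti _ _ ha.1 hb.1, ha.2, hb.2]⟩

def coverSub (hrefl : ∀ i, r i i) (hanti : ∀ i j, r i j → r j i → i = j)
    (htrans : ∀ i j k, r i j → r j k → r i k) {i j : Fin n} (hcov : Covers r i j)
    (s t : F) : Subring (Matrix (Fin n) (Fin n) (MF k F)) where
  carrier := {X | X ∈ IncSet n r (MF k F) ∧ s • (X i i - X j j) + t • X i j = 0}
  zero_mem' := ⟨fun _ _ _ => rfl, by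
    show s • ((0 : MF k F) - 0) + t • (0 : MF k F) = 0
    rw [sub_zero, smul_zero, smul_zero, add_zero]⟩
  one_mem' := ⟨(IncSubring n r hrefl htrans (MF k F)).one_mem, by
    rw [Matrix.one_apply_eq, Matrix.one_apply_eq, Matrix.one_apply_ne hcov.2.1,
      sub_self, smul_zero, smul_zero, add_zero]⟩
  add_mem' := fun {a b} ha hb => by
    refine ⟨(IncSubring n r hrefl htrans (MF k F)).add_mem ha.1 hb.1, ?_⟩
    rw [Matrix.add_apply, Matrix.add_apply, Matrix.add_apply, add_sub_add_comm,
      smul_add, smul_add, add_add_add_comm, ha.2, hb.2, add_zero]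
  neg_mem' := fun {a} ha => by
    refine ⟨(IncSubring n r hrefl htrans (MF k F)).neg_mem ha.1, ?_⟩
    rw [Matrix.neg_apply, Matrix.neg_apply, Matrix.neg_apply, neg_sub_neg, ← neg_sub,
      smul_neg, smul_neg, ← neg_add, ha.2, neg_zero]
  mul_mem' := fun {a b} ha hb => by
    refine ⟨(IncSubring n r hrefl htrans (MF k F)).mul_mem ha.1 hb.1, ?_⟩
    rw [inc_diag_mul hanti _ _ ha.1 hb.1, inc_diag_mul hanti _ _ ha.1 hb.1,
      inc_cover_mul hcov _ _ ha.1 hb.1]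
    have key : s • (a i i * b i i - a j j * b j j) + t • (a i i * b i j + a i j * b j j)
        = a i i * (s • (b i i - b j j) + t • b i j)
          + (s • (a i i - a j j) + t • a i j) * b j j := by
      simp only [mul_add, add_mul, mul_sub, sub_mul, mul_smul_comm, smul_mul_assoc,
        smul_sub, smul_add]
      abel
    rw [key, ha.2, hb.2, mul_zero, zero_mul, add_zero]

include hrefl hanti htrans hA in
lemma forward (hk : 1 ≤ k)
    (hgen : (Bcl A : Set (Matrix (Fin n) (Fin n) (MF k F))) = IncSet n r (MF k F)) :
    (∀ i j : Fin n, i ≠ j → ∃ α, A α i i ≠ A α j j) ∧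
      ∀ i j : Fin n, Covers r i j →
        LinearIndependent F ![fun α => A α i i - A α j j, fun α : Fin m => A α i j] := by
  classical
  have hmem : ∀ X ∈ IncSet n r (MF k F), X ∈ Bcl A := by
    intro X hX
    have : X ∈ (Bcl A : Set (Matrix (Fin n) (Fin n) (MF k F))) := hgen ▸ hX
    exact this
  have hzk : (0 : ℕ) < k := hk
  constructor
  · intro i j hij
    by_contra hcon
    push_neg at hcon
    have hle : Bcl A ≤ diagEqSub hrefl hanti htrans i j := by
      apply Subring.closure_le.2
      rintro Y (⟨α, rfl⟩ | ⟨c, rfl⟩)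
      · exact ⟨hA α, hcon α⟩
      · refine ⟨?_, ?_⟩
        · intro p q h
          have hpq : p ≠ q := fun e => h (e ▸ hrefl p)
          simp [Matrix.scalar_apply, Matrix.diagonal_apply_ne _ hpq]
        · show (Matrix.scalar (Fin n) c) i i = (Matrix.scalar (Fin n) c) j j
          rw [Matrix.scalar_apply, Matrix.diagonal_apply_eq, Matrix.diagonal_apply_eq]
    have hstd : Matrix.single i i (1 : MF k F) ∈ IncSet n r (MF k F) := by
      intro p q h
      refine Matrix.single_apply_of_ne _ _ _ _ _ ?_
      rintro ⟨rfl, rfl⟩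
      exact h (hrefl i)
    have := (hle (hmem _ hstd)).2
    rw [Matrix.single_apply_same,
      Matrix.single_apply_of_ne i i 1 j j (fun h => hij h.1)] at this
    have h10 : (1 : F) = 0 := by
      have := congrFun (congrFun this ⟨0, hzk⟩) ⟨0, hzk⟩
      simpa [Matrix.one_apply_eq] using this
    exact one_ne_zero h10
  · intro i j hcov
    rw [LinearIndependent.pair_iff]
    intro s t hst
    have hle : Bcl A ≤ coverSub hrefl hanti htrans hcov s t := by
      apply Subring.closure_le.2
      rintro Y (⟨α, rfl⟩ | ⟨c, rfl⟩)
      · refine ⟨hA α, ?_⟩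
        have := congrFun hst α
        simpa using this
      · refine ⟨?_, ?_⟩
        · intro p q h
          have hpq : p ≠ q := fun e => h (e ▸ hrefl p)
          simp [Matrix.scalar_apply, Matrix.diagonal_apply_ne _ hpq]
        · show s • ((Matrix.scalar (Fin n) c) i i - (Matrix.scalar (Fin n) c) j j)
              + t • (Matrix.scalar (Fin n) c) i j = 0
          rw [Matrix.scalar_apply, Matrix.diagonal_apply_eq, Matrix.diagonal_apply_eq,
            Matrix.diagonal_apply_ne _ hcov.2.1, sub_self, smul_zero, smul_zero, add_zero]
    have hstd_ii : Matrix.single i i (1 : MF k F) ∈ IncSet n r (MF k F) := by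
      intro p q h
      refine Matrix.single_apply_of_ne _ _ _ _ _ ?_
      rintro ⟨rfl, rfl⟩
      exact h (hrefl i)
    have hstd_ij : Matrix.single i j (1 : MF k F) ∈ IncSet n r (MF k F) := by
      intro p q h
      refine Matrix.single_apply_of_ne _ _ _ _ _ ?_
      rintro ⟨rfl, rfl⟩
      exact h hcov.1
    have hij : i ≠ j := hcov.2.1
    have hs : s = 0 := by
      have := (hle (hmem _ hstd_ii)).2
      rw [Matrix.single_apply_same,
        Matrix.single_apply_of_ne i i 1 j j (fun h => hij h.1),
        Matrix.single_apply_of_ne i i 1 i j (fun h => hij h.2),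
        sub_zero, smul_zero, add_zero] at this
      have := congrFun (congrFun this ⟨0, hzk⟩) ⟨0, hzk⟩
      simpa [Matrix.one_apply_eq] using this
    have ht : t = 0 := by
      have := (hle (hmem _ hstd_ij)).2
      rw [Matrix.single_apply_same,
        Matrix.single_apply_of_ne i j 1 i i (fun h => hij h.2.symm),
        Matrix.single_apply_of_ne i j 1 j j (fun h => hij h.1),
        sub_self, smul_zero, zero_add] at this
      have := congrFun (congrFun this ⟨0, hzk⟩) ⟨0, hzk⟩
      simpa [Matrix.one_apply_eq] using this
    exact ⟨hs, ht⟩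

end MatrixField
end Stmt10Aux

/-- generation criterion over `R = Mₖ(F)`: a finite nonempty set
`S = {A₁,…,A_m} ⊆ A_n(⪯,R)` together with `R·Iₙ` generates `A_n(⪯,R)` iff
(1) no two rows of the n×m matrix `Δ_{iα} = (A_α)ᵢᵢ` coincide, and
(2) for each covering pair `i ⋖ j`, the vectors
`v = ((A_α)ᵢᵢ − (A_α)ⱼⱼ)_α` and `w = ((A_α)ᵢⱼ)_α` of `R^m` are linearly
independent over the field F. -/
theorem stmt10 (k n m : ℕ) (hk : 1 ≤ k) (hn : 2 ≤ n) (hm : 1 ≤ m)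
    (F : Type*) [Field F]
    (r : Fin n → Fin n → Prop)
    (hrefl : ∀ i, r i i) (hanti : ∀ i j, r i j → r j i → i = j)
    (htrans : ∀ i j k, r i j → r j k → r i k)
    (A : Fin m → Matrix (Fin n) (Fin n) (Matrix (Fin k) (Fin k) F))
    (hA : ∀ α, A α ∈ IncSet n r (Matrix (Fin k) (Fin k) F)) :
    (Subring.closure (Set.range A ∪
          Set.range fun c : Matrix (Fin k) (Fin k) F => Matrix.scalar (Fin n) c) :
        Set (Matrix (Fin n) (Fin n) (Matrix (Fin k) (Fin k) F))) =
      IncSet n r (Matrix (Fin k) (Fin k) F) ↔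
      ((∀ i j : Fin n, i ≠ j → ∃ α, A α i i ≠ A α j j) ∧
        ∀ i j : Fin n, Covers r i j →
          LinearIndependent F
            ![fun α => A α i i - A α j j, fun α : Fin m => A α i j]) := by
  constructor
  · intro hgen
    exact Stmt10Aux.forward A hrefl hanti htrans hA hk hgen
  · intro ⟨h1, h2⟩
    exact Stmt10Aux.backward A hrefl hanti htrans hA h1 h2
end

section
/- Let A = A_n(⪯,F) be an incidence algebra over a field F and m ≥ 2. The complement A^m \ Gen_m(A,F) is an affine algebraic set: it equals the union over pairs i ≠ j of the linear subvarieties {(A_1,…,A_m) : (A_α)_{ii} = (A_α)_{jj} for all α} and, over covering pairs i ⋖ j, of the determinantal varieties defined by the vanishing of all 2×2 minors of the 2×m matrix with rows ((A_α)_{ii} − (A_α)_{jj})_α and ((A_α)_{ij})_α. -/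
open Matrix Finset

namespace Stmt13

variable {n : ℕ} {r : Fin n → Fin n → Prop}

/-- `C` is a chain from `a` to `b`. -/
def IsCh (r : Fin n → Fin n → Prop) (a b : Fin n) (C : Finset (Fin n)) : Prop :=
  a ∈ C ∧ b ∈ C ∧ (∀ x ∈ C, r a x ∧ r x b) ∧ ∀ x ∈ C, ∀ y ∈ C, r x y ∨ r y x

open scoped Classical in
/-- Maximal cardinality of a chain from `a` to `b`. -/
noncomputable def L (r : Fin n → Fin n → Prop) (a b : Fin n) : ℕ :=
  (Finset.univ.filter (fun C : Finset (Fin n) => IsCh r a b C)).sup Finset.card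

lemma card_le_L {a b : Fin n} {C : Finset (Fin n)} (h : IsCh r a b C) :
    C.card ≤ L r a b := by
  classical
  exact Finset.le_sup (by simpa [L, Finset.mem_filter] using h)

lemma isCh_pair (hrefl : ∀ i, r i i) {a b : Fin n} (hab : r a b) :
    IsCh r a b ({a, b} : Finset (Fin n)) := by
  refine ⟨by simp, by simp, ?_, ?_⟩
  · intro x hx
    rcases Finset.mem_insert.1 hx with rfl | hx
    · exact ⟨hrefl x, hab⟩
    · rcases Finset.mem_singleton.1 hx with rfl
      exact ⟨hab, hrefl x⟩
  · intro x hx y hy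
    rcases Finset.mem_insert.1 hx with rfl | hx <;>
      [skip; rcases Finset.mem_singleton.1 hx with rfl] <;>
    (rcases Finset.mem_insert.1 hy with rfl | hy <;>
      [skip; rcases Finset.mem_singleton.1 hy with rfl]) <;>
    first
      | exact Or.inl (hrefl _)
      | exact Or.inl hab
      | exact Or.inr hab

lemma one_le_L (hrefl : ∀ i, r i i) {a b : Fin n} (hab : r a b) : 1 ≤ L r a b :=
  le_trans (Finset.card_pos.2 ⟨a, by simp⟩) (card_le_L (isCh_pair hrefl hab))

lemma two_le_L (hrefl : ∀ i, r i i) {a b : Fin n} (hab : r a b) (hne : a ≠ b) :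
    2 ≤ L r a b := by
  have := card_le_L (r := r) (isCh_pair hrefl hab)
  rwa [Finset.card_pair hne] at this

lemma L_le_n {a b : Fin n} : L r a b ≤ n := by
  classical
  refine Finset.sup_le fun C _ => ?_
  simpa using Finset.card_le_card (Finset.subset_univ C)

lemma exists_L_chain (hrefl : ∀ i, r i i) {a b : Fin n} (hab : r a b) :
    ∃ C, IsCh r a b C ∧ C.card = L r a b := by
  classical
  have hne : (Finset.univ.filter (fun C : Finset (Fin n) => IsCh r a b C)).Nonempty :=
    ⟨{a, b}, by simpa [Finset.mem_filter] using isCh_pair hrefl hab⟩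
  obtain ⟨C, hC, hcard⟩ := Finset.exists_mem_eq_sup _ hne Finset.card
  exact ⟨C, (Finset.mem_filter.1 hC).2, by rw [← hcard]; rfl⟩

lemma eq_of_L_le_one (hrefl : ∀ i, r i i) {a b : Fin n} (hab : r a b)
    (h : L r a b ≤ 1) : a = b := by
  by_contra hne
  exact absurd (le_trans (two_le_L hrefl hab hne) h) (by norm_num)

lemma L_superadd (hanti : ∀ i j, r i j → r j i → i = j)
    (htrans : ∀ i j k, r i j → r j k → r i k) (hrefl : ∀ i, r i i)
    {a m b : Fin n} (ham : r a m) (hmb : r m b) :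
    L r a m + L r m b ≤ L r a b + 1 := by
  classical
  obtain ⟨C₁, h₁, e₁⟩ := exists_L_chain hrefl ham
  obtain ⟨C₂, h₂, e₂⟩ := exists_L_chain hrefl hmb
  obtain ⟨ha1, hm1, hb1, hch1⟩ := h₁
  obtain ⟨hm2, hb2, hb2', hch2⟩ := h₂
  have hinter : C₁ ∩ C₂ = {m} := by
    apply Finset.Subset.antisymm
    · intro x hx
      rcases Finset.mem_inter.1 hx with ⟨hx1, hx2⟩
      simp [hanti x m (hb1 x hx1).2 (hb2' x hx2).1]
    · simp [Finset.mem_inter.2 ⟨hm1, hm2⟩]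
  have hch : IsCh r a b (C₁ ∪ C₂) := by
    refine ⟨Finset.mem_union_left _ ha1, Finset.mem_union_right _ hb2, ?_, ?_⟩
    · intro x hx
      rcases Finset.mem_union.1 hx with hx | hx
      · exact ⟨(hb1 x hx).1, htrans _ _ _ (hb1 x hx).2 hmb⟩
      · exact ⟨htrans _ _ _ ham (hb2' x hx).1, (hb2' x hx).2⟩
    · intro x hx y hy
      rcases Finset.mem_union.1 hx with hx | hx <;> rcases Finset.mem_union.1 hy with hy | hy
      · exact hch1 x hx y hy
      · exact Or.inl (htrans _ _ _ (hb1 x hx).2 (hb2' y hy).1)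
      · exact Or.inr (htrans _ _ _ (hb1 y hy).2 (hb2' x hx).1)
      · exact hch2 x hx y hy
  have := Finset.card_union_add_card_inter C₁ C₂
  rw [hinter, Finset.card_singleton] at this
  calc L r a m + L r m b = (C₁ ∪ C₂).card + 1 := by rw [← e₁, ← e₂, ← this]
    _ ≤ L r a b + 1 := by exact Nat.add_le_add_right (card_le_L hch) 1

end Stmt13
section
open Matrix Finset
namespace Stmt13
variable {n : ℕ} {r : Fin n → Fin n → Prop}

lemma exists_minimal (hanti : ∀ i j, r i j → r j i → i = j)
    (htrans : ∀ i j k, r i j → r j k → r i k) :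
    ∀ s : Finset (Fin n), s.Nonempty → ∃ x ∈ s, ∀ y ∈ s, r y x → y = x := by
  classical
  intro s
  induction s using Finset.strongInduction with
  | _ s ih =>
    intro hs
    obtain ⟨x₀, hx₀⟩ := hs
    by_cases hte : (s.filter (fun y => r y x₀ ∧ y ≠ x₀)).Nonempty
    · have hsub : s.filter (fun y => r y x₀ ∧ y ≠ x₀) ⊂ s := by
        refine ⟨Finset.filter_subset _ _, fun hsu => ?_⟩
        have := hsu hx₀
        simp at this
      obtain ⟨x, hxt, hmin⟩ := ih _ hsub hte
      obtain ⟨hxs, hxx₀, hxne⟩ : x ∈ s ∧ r x x₀ ∧ x ≠ x₀ := by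
        simpa using hxt
      refine ⟨x, hxs, fun y hy hyx => ?_⟩
      by_cases hyx₀ : y = x₀
      · subst hyx₀
        exact (hxne (hanti x y hxx₀ hyx)).elim
      · exact hmin y (Finset.mem_filter.2 ⟨hy, htrans y x x₀ hyx hxx₀, hyx₀⟩) hyx
    · refine ⟨x₀, hx₀, fun y hy hyx => ?_⟩
      by_contra hne
      exact hte ⟨y, Finset.mem_filter.2 ⟨hy, hyx, hne⟩⟩

lemma L_eq_two_of_covers (hrefl : ∀ i, r i i) {a b : Fin n} (h : Covers r a b) :
    L r a b = 2 := by
  classical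
  refine le_antisymm (Finset.sup_le fun C hC => ?_) (two_le_L hrefl h.1 h.2.1)
  obtain ⟨-, -, hbd, -⟩ := (Finset.mem_filter.1 hC).2
  have hsub : C ⊆ {a, b} := by
    intro x hx
    obtain ⟨hax, hxb⟩ := hbd x hx
    have := h.2.2 x
    by_cases h1 : a = x
    · simp [h1]
    · by_cases h2 : x = b
      · simp [h2]
      · exact absurd ⟨⟨hax, h1⟩, hxb, h2⟩ this
  have h2 : ({a, b} : Finset (Fin n)).card ≤ 2 := (Finset.card_insert_le _ _).trans (by simp)
  exact le_trans (Finset.card_le_card hsub) h2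

lemma L_self_le_one (hanti : ∀ i j, r i j → r j i → i = j) {a : Fin n} :
    L r a a ≤ 1 := by
  classical
  refine Finset.sup_le fun C hC => ?_
  obtain ⟨-, -, hbd, -⟩ := (Finset.mem_filter.1 hC).2
  have : C ⊆ {a} := fun x hx => by
    simp [hanti x a (hbd x hx).2 (hbd x hx).1]
  simpa using Finset.card_le_card this

lemma covers_of_L_eq_two (hrefl : ∀ i, r i i) (hanti : ∀ i j, r i j → r j i → i = j)
    (htrans : ∀ i j k, r i j → r j k → r i k)
    {a b : Fin n} (hab : r a b) (h : L r a b = 2) : Covers r a b := by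
  have hne : a ≠ b := by
    rintro rfl
    have := L_self_le_one (r := r) hanti (a := a)
    omega
  refine ⟨hab, hne, fun k hk => ?_⟩
  obtain ⟨⟨hak, hak'⟩, hkb, hkb'⟩ := hk
  have hka : k ≠ a := fun hh => hak' hh.symm
  have hch : IsCh r a b ({a, k, b} : Finset (Fin n)) := by
    refine ⟨by simp, by simp, ?_, ?_⟩
    · intro x hx
      simp only [Finset.mem_insert, Finset.mem_singleton] at hx
      rcases hx with rfl | rfl | rfl
      · exact ⟨hrefl x, hab⟩
      · exact ⟨hak, hkb⟩
      · exact ⟨hab, hrefl x⟩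
    · intro x hx y hy
      simp only [Finset.mem_insert, Finset.mem_singleton] at hx hy
      rcases hx with rfl | rfl | rfl <;> rcases hy with rfl | rfl | rfl <;>
        first
          | exact Or.inl (hrefl _)
          | exact Or.inl hab
          | exact Or.inr hab
          | exact Or.inl hak
          | exact Or.inr hak
          | exact Or.inl hkb
          | exact Or.inr hkb
  have h3 : ({a, k, b} : Finset (Fin n)).card = 3 := by
    rw [Finset.card_insert_of_notMem (by simp [hak', hne]),
      Finset.card_insert_of_notMem (by simp [hkb']), Finset.card_singleton]
  have := card_le_L hch
  omega

lemma L_decomp (hrefl : ∀ i, r i i) (hanti : ∀ i j, r i j → r j i → i = j)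
    (htrans : ∀ i j k, r i j → r j k → r i k)
    {a b : Fin n} {s : ℕ} (hab : r a b) (hL : L r a b = s) (hs : 3 ≤ s) :
    ∃ x, Covers r a x ∧ r x b ∧ L r x b = s - 1 := by
  classical
  obtain ⟨C, ⟨haC, hbC, hbd, hch⟩, hcard⟩ := exists_L_chain hrefl hab
  rw [hL] at hcard
  have hne : a ≠ b := by
    rintro rfl
    have := L_self_le_one (r := r) hanti (a := a)
    omega
  have hCa : (C.erase a).Nonempty := by
    rw [← Finset.card_pos, Finset.card_erase_of_mem haC]
    omega
  obtain ⟨x, hxE, hmin⟩ := exists_minimal hanti htrans _ hCa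
  have hxC : x ∈ C := Finset.mem_of_mem_erase hxE
  have hxa : x ≠ a := Finset.ne_of_mem_erase hxE
  have hax : r a x := (hbd x hxC).1
  have key : ∀ c ∈ C, c ≠ a → r x c := by
    intro c hc hca
    rcases hch x hxC c hc with h | h
    · exact h
    · have := hmin c (Finset.mem_erase.2 ⟨hca, hc⟩) h
      subst this
      exact hrefl c
  have hcov : Covers r a x := by
    refine ⟨hax, hxa.symm, fun k hk => ?_⟩
    obtain ⟨⟨hak, hak'⟩, hkx, hkx'⟩ := hk
    have hkC : k ∉ C := by
      intro hkC
      exact hkx' (hanti k x hkx (key k hkC (fun hh => hak' hh.symm)))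
    have hch' : IsCh r a b (insert k C) := by
      refine ⟨Finset.mem_insert_of_mem haC, Finset.mem_insert_of_mem hbC, ?_, ?_⟩
      · intro y hy
        rcases Finset.mem_insert.1 hy with rfl | hy
        · exact ⟨hak, htrans y x b hkx (hbd x hxC).2⟩
        · exact hbd y hy
      · have hall : ∀ y ∈ insert k C, r k y ∨ r y k := by
          intro y hy
          rcases Finset.mem_insert.1 hy with heq | hy'
          · cases heq; exact Or.inl (hrefl _)
          · by_cases hya : y = a
            · subst hya; exact Or.inr hak
            · exact Or.inl (htrans k x y hkx (key y hy' hya))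
        intro y hy z hz
        rcases Finset.mem_insert.1 hy with heq | hy'
        · cases heq; exact hall z hz
        · rcases Finset.mem_insert.1 hz with heq | hz'
          · cases heq; exact Or.symm (hall y hy)
          · exact hch y hy' z hz'
    have := card_le_L hch'
    rw [Finset.card_insert_of_notMem hkC] at this
    omega
  have hxb : r x b := (hbd x hxC).2
  refine ⟨x, hcov, hxb, ?_⟩
  have hba : b ≠ a := hne.symm
  have hlow : s - 1 ≤ L r x b := by
    have hch' : IsCh r x b (C.erase a) := by
      refine ⟨hxE, Finset.mem_erase.2 ⟨hba, hbC⟩, ?_, ?_⟩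
      · intro y hy
        exact ⟨key y (Finset.mem_of_mem_erase hy) (Finset.ne_of_mem_erase hy),
          (hbd y (Finset.mem_of_mem_erase hy)).2⟩
      · intro y hy z hz
        exact hch y (Finset.mem_of_mem_erase hy) z (Finset.mem_of_mem_erase hz)
    have := card_le_L hch'
    rw [Finset.card_erase_of_mem haC] at this
    omega
  have hhigh := L_superadd hanti htrans hrefl hax hxb
  have h2 := L_eq_two_of_covers hrefl hcov
  omega

end Stmt13
end
section
open Matrix Finset
namespace Stmt13
variable {n : ℕ} {r : Fin n → Fin n → Prop} {F : Type*} [Field F]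

/-- Filtration of the incidence algebra by chain length. -/
def Gr (r : Fin n → Fin n → Prop) (s : ℕ) (B : Matrix (Fin n) (Fin n) F) : Prop :=
  ∀ a b : Fin n, (¬ r a b ∨ L r a b ≤ s) → B a b = 0

lemma Gr.incSet {s : ℕ} {B : Matrix (Fin n) (Fin n) F} (h : Gr r s B) :
    B ∈ IncSet n r F := fun a b hab => h a b (Or.inl hab)

lemma gr_zero_of_incSet (hrefl : ∀ i, r i i) {B : Matrix (Fin n) (Fin n) F}
    (h : B ∈ IncSet n r F) : Gr r 0 B := by
  intro a b hab
  by_cases hr : r a b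
  · rcases hab with hab | hab
    · exact absurd hr hab
    · exact absurd (le_trans (one_le_L hrefl hr) hab) (by norm_num)
  · exact h a b hr

lemma Gr.mono {s t : ℕ} (hst : s ≤ t) {B : Matrix (Fin n) (Fin n) F} (h : Gr r t B) :
    Gr r s B := fun a b hab => h a b (by rcases hab with h' | h'; exacts [Or.inl h', Or.inr (h'.trans hst)])

lemma Gr.sub {s : ℕ} {B C : Matrix (Fin n) (Fin n) F} (hB : Gr r s B) (hC : Gr r s C) :
    Gr r s (B - C) := fun a b hab => by
  simp [Matrix.sub_apply, hB a b hab, hC a b hab]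

lemma Gr.add {s : ℕ} {B C : Matrix (Fin n) (Fin n) F} (hB : Gr r s B) (hC : Gr r s C) :
    Gr r s (B + C) := fun a b hab => by
  simp [Matrix.add_apply, hB a b hab, hC a b hab]

lemma Gr.smul {s : ℕ} (c : F) {B : Matrix (Fin n) (Fin n) F} (hB : Gr r s B) :
    Gr r s (c • B) := fun a b hab => by
  simp [Matrix.smul_apply, hB a b hab]

lemma gr_zero_matrix (s : ℕ) : Gr r s (0 : Matrix (Fin n) (Fin n) F) := fun a b _ => rfl

lemma Gr.mul (hrefl : ∀ i, r i i) (hanti : ∀ i j, r i j → r j i → i = j)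
    (htrans : ∀ i j k, r i j → r j k → r i k)
    {s t : ℕ} {B C : Matrix (Fin n) (Fin n) F} (hB : Gr r s B) (hC : Gr r t C) :
    Gr r (s + t) (B * C) := by
  intro a b hab
  rw [Matrix.mul_apply]
  refine Finset.sum_eq_zero fun k _ => ?_
  by_cases h1 : r a k
  · by_cases h2 : s + 1 ≤ L r a k
    · by_cases h3 : r k b
      · by_cases h4 : t + 1 ≤ L r k b
        · exfalso
          have hrab : r a b := htrans a k b h1 h3
          have hLab : L r a b ≤ s + t := by
            rcases hab with hab | hab
            · exact absurd hrab hab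
            · exact hab
          have := L_superadd hanti htrans hrefl h1 h3
          omega
        · rw [hC k b (Or.inr (by omega)), mul_zero]
      · rw [hC k b (Or.inl h3), mul_zero]
    · rw [hB a k (Or.inr (by omega)), zero_mul]
  · rw [hB a k (Or.inl h1), zero_mul]

lemma Gr.eq_zero {B : Matrix (Fin n) (Fin n) F} (h : Gr r n B) : B = 0 := by
  ext a b
  refine h a b ?_
  by_cases hr : r a b
  · exact Or.inr L_le_n
  · exact Or.inl hr

lemma gr_stdBasisMatrix {s : ℕ} {a b : Fin n} (hab : r a b) (h : s + 1 ≤ L r a b) (c : F) :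
    Gr r s (Matrix.single a b c) := by
  intro x y hxy
  by_cases hx : a = x ∧ b = y
  · obtain ⟨rfl, rfl⟩ := hx
    rcases hxy with h' | h'
    · exact absurd hab h'
    · omega
  · simp [Matrix.single, hx]

end Stmt13
end
section
open Matrix Finset
namespace Stmt13
variable {n : ℕ} {r : Fin n → Fin n → Prop} {F : Type*} [Field F]

lemma diag_mul (hanti : ∀ i j, r i j → r j i → i = j)
    {X Y : Matrix (Fin n) (Fin n) F} (hX : X ∈ IncSet n r F) (hY : Y ∈ IncSet n r F)
    (a : Fin n) : (X * Y) a a = X a a * Y a a := by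
  rw [Matrix.mul_apply]
  refine Finset.sum_eq_single a (fun k _ hk => ?_) (fun h => absurd (Finset.mem_univ a) h)
  by_cases h1 : r a k
  · by_cases h2 : r k a
    · exact absurd (hanti k a h2 h1) hk
    · rw [hY k a h2, mul_zero]
  · rw [hX a k h1, zero_mul]

lemma cov_mul {a b : Fin n} (hcov : Covers r a b)
    {X Y : Matrix (Fin n) (Fin n) F} (hX : X ∈ IncSet n r F) (hY : Y ∈ IncSet n r F) :
    (X * Y) a b = X a a * Y a b + X a b * Y b b := by
  rw [Matrix.mul_apply]
  refine Finset.sum_eq_add a b hcov.2.1 (fun k _ hk => ?_)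
    (fun h => absurd (Finset.mem_univ a) h) (fun h => absurd (Finset.mem_univ b) h)
  by_cases h1 : r a k
  · by_cases h2 : r k b
    · by_cases h3 : a = k
      · exact absurd h3.symm hk.1
      · by_cases h4 : k = b
        · exact absurd h4 hk.2
        · exact absurd ⟨⟨h1, h3⟩, h2, h4⟩ (hcov.2.2 k)
    · rw [hY k b h2, mul_zero]
  · rw [hX a k h1, zero_mul]

variable (R : Subring (Matrix (Fin n) (Fin n) F))

lemma smul_mem_scal (hscal : ∀ c : F, Matrix.scalar (Fin n) c ∈ R)
    {B : Matrix (Fin n) (Fin n) F} (hB : B ∈ R) (c : F) : c • B ∈ R := by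
  have : c • B = Matrix.scalar (Fin n) c * B := by
    rw [Matrix.scalar_apply, Matrix.smul_eq_diagonal_mul]
  rw [this]
  exact R.mul_mem (hscal c) hB

/-- An element of `R` whose diagonal is `1` at `a` and `0` on a given finset. -/
lemma diag_proj {m : ℕ} (hRinc : ∀ B ∈ R, B ∈ IncSet n r F)
    (hscal : ∀ c : F, Matrix.scalar (Fin n) c ∈ R)
    (hanti : ∀ i j, r i j → r j i → i = j)
    (A : Fin m → Matrix (Fin n) (Fin n) F) (hA : ∀ α, A α ∈ R)
    (hsep : ∀ i j : Fin n, i ≠ j → ∃ α, A α i i ≠ A α j j) (a : Fin n) :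
    ∀ t : Finset (Fin n), a ∉ t → ∃ C ∈ R, C a a = 1 ∧ ∀ j ∈ t, C j j = 0 := by
  classical
  intro t
  induction t using Finset.induction with
  | empty =>
    exact fun _ => ⟨1, R.one_mem, Matrix.one_apply_eq a, by simp⟩
  | @insert j t hjt ih =>
    intro hins
    obtain ⟨C, hCR, hCa, hCt⟩ := ih (fun h => hins (Finset.mem_insert_of_mem h))
    have haj : a ≠ j := fun h => hins (by rw [h]; exact Finset.mem_insert_self _ _)
    obtain ⟨γ, hγ⟩ := hsep a j haj
    set d : F := A γ a a - A γ j j with hd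
    have hdne : d ≠ 0 := sub_ne_zero.2 hγ
    set B : Matrix (Fin n) (Fin n) F := d⁻¹ • (A γ - Matrix.scalar (Fin n) (A γ j j)) with hB
    have hBR : B ∈ R := smul_mem_scal R hscal (R.sub_mem (hA γ) (hscal _)) _
    have hBaa : B a a = 1 := by
      simp [hB, Matrix.smul_apply, Matrix.sub_apply, Matrix.scalar_apply, Matrix.diagonal_apply_eq,
        ← hd, inv_mul_cancel₀ hdne]
    have hBjj : B j j = 0 := by
      simp [hB, Matrix.smul_apply, Matrix.sub_apply, Matrix.scalar_apply, Matrix.diagonal_apply_eq]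
    refine ⟨C * B, R.mul_mem hCR hBR, ?_, ?_⟩
    · rw [diag_mul hanti (hRinc C hCR) (hRinc B hBR), hCa, hBaa, one_mul]
    · intro j' hj'
      rw [diag_mul hanti (hRinc C hCR) (hRinc B hBR)]
      rcases Finset.mem_insert.1 hj' with rfl | hj'
      · rw [hBjj, mul_zero]
      · rw [hCt j' hj', zero_mul]

/-- An element of `R` with `(i,i)`, `(j,j)` entries `0` and `(i,j)` entry `1`,
for a covering pair, given the rank condition. -/
lemma cov_elt {m : ℕ} (hRinc : ∀ B ∈ R, B ∈ IncSet n r F)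
    (hscal : ∀ c : F, Matrix.scalar (Fin n) c ∈ R)
    (hanti : ∀ i j, r i j → r j i → i = j)
    (A : Fin m → Matrix (Fin n) (Fin n) F) (hA : ∀ α, A α ∈ R)
    (hsep : ∀ i j : Fin n, i ≠ j → ∃ α, A α i i ≠ A α j j)
    {i j : Fin n} (hcov : Covers r i j)
    (hrank : ∃ α β, (A α i i - A α j j) * A β i j ≠ (A β i i - A β j j) * A α i j) :
    ∃ C ∈ R, C i i = 0 ∧ C j j = 0 ∧ C i j = 1 := by
  obtain ⟨γ, hγ⟩ := hsep i j hcov.2.1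
  set d : F := A γ i i - A γ j j with hd
  have hdne : d ≠ 0 := sub_ne_zero.2 hγ
  set p : Matrix (Fin n) (Fin n) F := d⁻¹ • (A γ - Matrix.scalar (Fin n) (A γ j j)) with hp
  have hpR : p ∈ R := smul_mem_scal R hscal (R.sub_mem (hA γ) (hscal _)) _
  have hpinc := hRinc p hpR
  have hpii : p i i = 1 := by
    simp [hp, Matrix.smul_apply, Matrix.sub_apply, Matrix.scalar_apply, Matrix.diagonal_apply_eq,
      ← hd, inv_mul_cancel₀ hdne]
  have hpjj : p j j = 0 := by
    simp [hp, Matrix.smul_apply, Matrix.sub_apply, Matrix.scalar_apply, Matrix.diagonal_apply_eq]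
  set s₀ : F := p i j with hs₀
  set q : Matrix (Fin n) (Fin n) F := 1 - p with hq
  have hqR : q ∈ R := R.sub_mem R.one_mem hpR
  have hqinc := hRinc q hqR
  have hqii : q i i = 0 := by simp [hq, Matrix.sub_apply, Matrix.one_apply_eq, hpii]
  have hqjj : q j j = 1 := by simp [hq, Matrix.sub_apply, Matrix.one_apply_eq, hpjj]
  have hqij : q i j = -s₀ := by
    simp [hq, Matrix.sub_apply, Matrix.one_apply_ne hcov.2.1, hs₀]
  -- the key computation
  have main : ∀ y : Matrix (Fin n) (Fin n) F, y ∈ R →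
      (p * y * q) i i = 0 ∧ (p * y * q) j j = 0 ∧
      (p * y * q) i j = y i j - s₀ * (y i i - y j j) := by
    intro y hyR
    have hyinc := hRinc y hyR
    have hpyinc := hRinc _ (R.mul_mem hpR hyR)
    refine ⟨?_, ?_, ?_⟩
    · rw [diag_mul hanti hpyinc hqinc, diag_mul hanti hpinc hyinc, hqii, mul_zero]
    · rw [diag_mul hanti hpyinc hqinc, diag_mul hanti hpinc hyinc, hpjj, hqjj, zero_mul, mul_one]
    · rw [cov_mul hcov hpyinc hqinc, cov_mul hcov hpinc hyinc,
        diag_mul hanti hpinc hyinc, hpii, hqjj, hqij, ← hs₀]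
      ring
  obtain ⟨α, β, hαβ⟩ := hrank
  have hex : ∃ y, (y ∈ R) ∧ y i j - s₀ * (y i i - y j j) ≠ 0 := by
    by_contra hc
    push_neg at hc
    have h1 : A α i j = s₀ * (A α i i - A α j j) := by
      linear_combination hc (A α) (hA α)
    have h2 : A β i j = s₀ * (A β i i - A β j j) := by
      linear_combination hc (A β) (hA β)
    apply hαβ
    rw [h1, h2]; ring
  obtain ⟨y, hyR, hyne⟩ := hex
  obtain ⟨h1, h2, h3⟩ := main y hyR
  set w : F := y i j - s₀ * (y i i - y j j) with hw
  refine ⟨w⁻¹ • (p * y * q), smul_mem_scal R hscal (R.mul_mem (R.mul_mem hpR hyR) hqR) _, ?_, ?_, ?_⟩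
  · simp [Matrix.smul_apply, h1]
  · simp [Matrix.smul_apply, h2]
  · simp [Matrix.smul_apply, h3, ← hw, inv_mul_cancel₀ hyne]

end Stmt13
end
section
open Matrix Finset
namespace Stmt13
variable {n : ℕ} {r : Fin n → Fin n → Prop} {F : Type*} [Field F]

lemma gr_sum {ι : Type*} {t : ℕ} (s : Finset ι) (f : ι → Matrix (Fin n) (Fin n) F)
    (h : ∀ i ∈ s, Gr r t (f i)) : Gr r t (∑ i ∈ s, f i) := by
  intro a b hab
  rw [Matrix.sum_apply]
  exact Finset.sum_eq_zero fun i hi => h i hi a b hab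

variable (R : Subring (Matrix (Fin n) (Fin n) F))

lemma key (hrefl : ∀ i, r i i) (hanti : ∀ i j, r i j → r j i → i = j)
    (htrans : ∀ i j k, r i j → r j k → r i k)
    (hRinc : ∀ B ∈ R, B ∈ IncSet n r F)
    (hscal : ∀ c : F, Matrix.scalar (Fin n) c ∈ R)
    {m : ℕ} (A : Fin m → Matrix (Fin n) (Fin n) F) (hA : ∀ α, A α ∈ R)
    (hsep : ∀ i j : Fin n, i ≠ j → ∃ α, A α i i ≠ A α j j)
    (hrank : ∀ i j : Fin n, Covers r i j →
      ∃ α β, (A α i i - A α j j) * A β i j ≠ (A β i i - A β j j) * A α i j) :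
    ∀ s : ℕ, ∀ a b : Fin n, r a b → L r a b = s + 1 →
      ∃ C ∈ R, Gr r s C ∧ Gr r (s + 1) (Matrix.single a b (1 : F) - C) := by
  intro s
  induction s using Nat.strong_induction_on with
  | _ s ih =>
  intro a b hab hL
  obtain _ | (_ | t) := s
  · -- s = 0
    have hba : a = b := eq_of_L_le_one hrefl hab (by omega)
    subst hba
    classical
    obtain ⟨C, hCR, hCa, hCt⟩ := diag_proj R hRinc hscal hanti A hA hsep a
      (Finset.univ.erase a) (by simp)
    refine ⟨C, hCR, gr_zero_of_incSet hrefl (hRinc C hCR), ?_⟩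
    intro x y hxy
    rw [Matrix.sub_apply]
    by_cases hr : r x y
    · have hL1 : L r x y ≤ 1 := by
        rcases hxy with h' | h'
        · exact absurd hr h'
        · exact h'
      have hxy' : x = y := eq_of_L_le_one hrefl hr hL1
      subst hxy'
      by_cases hxa : x = a
      · subst hxa
        simp [Matrix.single_apply_same, hCa]
      · have hC0 : C x x = 0 := hCt x (Finset.mem_erase.2 ⟨hxa, Finset.mem_univ x⟩)
        have hE : Matrix.single a a (1 : F) x x = 0 := by
          simp [Matrix.single, (Ne.symm hxa : ¬ a = x)]
        rw [hE, hC0, sub_zero]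
    · have hE : Matrix.single a a (1 : F) x y = 0 := by
        by_cases hx : a = x ∧ a = y
        · exact absurd (hx.1 ▸ hx.2 ▸ hrefl a) hr
        · simp [Matrix.single, hx]
      rw [hE, hRinc C hCR x y hr, sub_zero]
  · -- s = 1
    have hcov : Covers r a b := covers_of_L_eq_two hrefl hanti htrans hab hL
    classical
    obtain ⟨C₀, hC₀R, hC₀ii, hC₀jj, hC₀ij⟩ := cov_elt R hRinc hscal hanti A hA hsep hcov
      (hrank a b hcov)
    obtain ⟨P, hPR, hPa, hPt⟩ := diag_proj R hRinc hscal hanti A hA hsep a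
      (Finset.univ.erase a) (by simp)
    obtain ⟨Q, hQR, hQb, hQt⟩ := diag_proj R hRinc hscal hanti A hA hsep b
      (Finset.univ.erase b) (by simp)
    have hPinc := hRinc P hPR
    have hC₀inc := hRinc C₀ hC₀R
    have hQinc := hRinc Q hQR
    have hPC₀inc := hRinc _ (R.mul_mem hPR hC₀R)
    have hCR : P * C₀ * Q ∈ R := R.mul_mem (R.mul_mem hPR hC₀R) hQR
    have hdiag : ∀ x : Fin n, (P * C₀ * Q) x x = P x x * C₀ x x * Q x x := by
      intro x
      rw [diag_mul hanti hPC₀inc hQinc, diag_mul hanti hPinc hC₀inc]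
    have hdiag0 : ∀ x : Fin n, (P * C₀ * Q) x x = 0 := by
      intro x
      rw [hdiag x]
      by_cases hxa : x = a
      · subst hxa; rw [hC₀ii, mul_zero, zero_mul]
      · rw [hPt x (Finset.mem_erase.2 ⟨hxa, Finset.mem_univ x⟩), zero_mul, zero_mul]
    have hGr1 : Gr r 1 (P * C₀ * Q) := by
      intro x y hxy
      by_cases hr : r x y
      · have hL1 : L r x y ≤ 1 := by
          rcases hxy with h' | h'
          · exact absurd hr h'
          · exact h'
        have hxy' : x = y := eq_of_L_le_one hrefl hr hL1
        subst hxy'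
        exact hdiag0 x
      · exact hRinc _ hCR x y hr
    refine ⟨P * C₀ * Q, hCR, hGr1, ?_⟩
    intro x y hxy
    rw [Matrix.sub_apply]
    by_cases hr : r x y
    · have hL2 : L r x y ≤ 2 := by
        rcases hxy with h' | h'
        · exact absurd hr h'
        · exact h'
      by_cases hL1 : L r x y ≤ 1
      · have hxy' : x = y := eq_of_L_le_one hrefl hr hL1
        subst hxy'
        have hE : Matrix.single a b (1 : F) x x = 0 := by
          by_cases hx : a = x ∧ b = x
          · exact absurd (hx.1.trans hx.2.symm) hcov.2.1
          · simp [Matrix.single, hx]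
        rw [hE, hdiag0 x, sub_zero]
      · have hL2' : L r x y = 2 := by omega
        have hcov' : Covers r x y := covers_of_L_eq_two hrefl hanti htrans hr hL2'
        have hform : (P * C₀ * Q) x y =
            P x x * C₀ x x * Q x y + (P x x * C₀ x y + P x y * C₀ y y) * Q y y := by
          rw [cov_mul hcov' hPC₀inc hQinc, cov_mul hcov' hPinc hC₀inc,
            diag_mul hanti hPinc hC₀inc]
        by_cases hxa : x = a
        · subst hxa
          by_cases hyb : y = b
          · subst hyb
            rw [hform, hPa, hC₀ii, hC₀ij, hQb, hC₀jj, Matrix.single_apply_same]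
            ring
          · have hQ0 : Q y y = 0 := hQt y (Finset.mem_erase.2 ⟨hyb, Finset.mem_univ y⟩)
            have hE : Matrix.single x b (1 : F) x y = 0 := by
              simp [Matrix.single, (Ne.symm hyb : ¬ b = y)]
            rw [hform, hE, hC₀ii, hQ0]
            ring
        · have hP0 : P x x = 0 := hPt x (Finset.mem_erase.2 ⟨hxa, Finset.mem_univ x⟩)
          have hE : Matrix.single a b (1 : F) x y = 0 := by
            simp [Matrix.single, (Ne.symm hxa : ¬ a = x)]
          rw [hform, hE, hP0]
          by_cases hyb : y = b
          · subst hyb; rw [hC₀jj]; ring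
          · rw [hQt y (Finset.mem_erase.2 ⟨hyb, Finset.mem_univ y⟩)]; ring
    · have hE : Matrix.single a b (1 : F) x y = 0 := by
        by_cases hx : a = x ∧ b = y
        · exact absurd (hx.1 ▸ hx.2 ▸ hab) hr
        · simp [Matrix.single, hx]
      rw [hE, hRinc _ hCR x y hr, sub_zero]
  · -- s = t + 2
    obtain ⟨x, hcov, hxb, hLxb⟩ := L_decomp hrefl hanti htrans hab hL (by omega)
    have hLxb' : L r x b = (t + 1) + 1 := by omega
    obtain ⟨C₂, hC₂R, hC₂Gr, hC₂⟩ := ih (t+1) (by omega) x b hxb hLxb'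
    have hLax : L r a x = 1 + 1 := L_eq_two_of_covers hrefl hcov
    obtain ⟨C₁, hC₁R, hC₁Gr, hC₁⟩ := ih 1 (by omega) a x hcov.1 hLax
    refine ⟨C₁ * C₂, R.mul_mem hC₁R hC₂R, ?_, ?_⟩
    · have h := Gr.mul hrefl hanti htrans hC₁Gr hC₂Gr
      rwa [show 1 + (t + 1) = t + 1 + 1 from by omega] at h
    · have hEE : Matrix.single a x (1 : F) * Matrix.single x b (1 : F) =
        Matrix.single a b (1 : F) := by
        rw [Matrix.single_mul_single_same, one_mul]
      have hid : Matrix.single a b (1 : F) - C₁ * C₂ =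
          (Matrix.single a x (1 : F) - C₁) * Matrix.single x b (1 : F) +
            C₁ * (Matrix.single x b (1 : F) - C₂) := by
        rw [← hEE]
        noncomm_ring
      rw [hid]
      have h1 : Gr r (t + 3) ((Matrix.single a x (1 : F) - C₁) *
          Matrix.single x b (1 : F)) := by
        have h := Gr.mul hrefl hanti htrans hC₁
          (gr_stdBasisMatrix (s := t + 1) hxb (by omega) (1 : F))
        rwa [show 2 + (t + 1) = t + 3 from by omega] at h
      have h2 : Gr r (t + 3) (C₁ * (Matrix.single x b (1 : F) - C₂)) := by
        have h := Gr.mul hrefl hanti htrans hC₁Gr hC₂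
        rwa [show 1 + (t + 1 + 1) = t + 3 from by omega] at h
      exact Gr.add h1 h2

lemma suff (hrefl : ∀ i, r i i) (hanti : ∀ i j, r i j → r j i → i = j)
    (htrans : ∀ i j k, r i j → r j k → r i k)
    (hRinc : ∀ B ∈ R, B ∈ IncSet n r F)
    (hscal : ∀ c : F, Matrix.scalar (Fin n) c ∈ R)
    {m : ℕ} (A : Fin m → Matrix (Fin n) (Fin n) F) (hA : ∀ α, A α ∈ R)
    (hsep : ∀ i j : Fin n, i ≠ j → ∃ α, A α i i ≠ A α j j)
    (hrank : ∀ i j : Fin n, Covers r i j →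
      ∃ α β, (A α i i - A α j j) * A β i j ≠ (A β i i - A β j j) * A α i j) :
    ∀ B ∈ IncSet n r F, B ∈ R := by
  classical
  suffices h : ∀ k : ℕ, ∀ B : Matrix (Fin n) (Fin n) F, Gr r (n - k) B → B ∈ R by
    intro B hB
    exact h n B (by simpa using gr_zero_of_incSet hrefl hB)
  intro k
  induction k with
  | zero =>
    intro B hB
    have : B = 0 := Gr.eq_zero (by simpa using hB)
    rw [this]; exact R.zero_mem
  | succ k ihk =>
    intro B hB
    set s : ℕ := n - (k + 1) with hs
    have hch : ∀ ab : Fin n × Fin n, ∃ C ∈ R,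
        Gr r (s + 1) (Matrix.single ab.1 ab.2 (B ab.1 ab.2) - C) := by
      rintro ⟨a, b⟩
      by_cases hr : r a b
      · by_cases hL : L r a b = s + 1
        · obtain ⟨C, hCR, _, hC2⟩ := key R hrefl hanti htrans hRinc hscal A hA hsep hrank
            s a b hr hL
          refine ⟨B a b • C, smul_mem_scal R hscal hCR _, ?_⟩
          have heq : Matrix.single a b (B a b) - B a b • C =
              B a b • (Matrix.single a b (1 : F) - C) := by
            rw [smul_sub, Matrix.smul_single, smul_eq_mul, mul_one]
          rw [heq]
          exact Gr.smul _ hC2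
        · by_cases hL2 : L r a b ≤ s
          · refine ⟨0, R.zero_mem, ?_⟩
            rw [hB a b (Or.inr (by omega)), sub_zero]
            intro x y _
            simp [Matrix.single]
          · refine ⟨0, R.zero_mem, ?_⟩
            rw [sub_zero]
            exact gr_stdBasisMatrix hr (by omega) _
      · refine ⟨0, R.zero_mem, ?_⟩
        rw [hB a b (Or.inl hr), sub_zero]
        intro x y _
        simp [Matrix.single]
    choose C hCR hCGr using hch
    have hsumR : ∑ ab : Fin n × Fin n, C ab ∈ R :=
      Subring.sum_mem R fun ab _ => hCR ab
    have hrest : Gr r (s + 1) (B - ∑ ab : Fin n × Fin n, C ab) := by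
      have hBdec : B = ∑ ab : Fin n × Fin n, Matrix.single ab.1 ab.2 (B ab.1 ab.2) := by
        rw [show (Finset.univ : Finset (Fin n × Fin n)) = Finset.univ ×ˢ Finset.univ from
          Finset.univ_product_univ.symm, Finset.sum_product]
        exact Matrix.matrix_eq_sum_single B
      have heq : B - ∑ ab : Fin n × Fin n, C ab = ∑ ab : Fin n × Fin n,
          (Matrix.single ab.1 ab.2 (B ab.1 ab.2) - C ab) := by
        rw [Finset.sum_sub_distrib, ← hBdec]
      rw [heq]
      exact gr_sum _ _ fun ab _ => hCGr ab
    have hmem : B - ∑ ab : Fin n × Fin n, C ab ∈ R := by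
      apply ihk
      exact Gr.mono (by omega) hrest
    have := R.add_mem hmem hsumR
    simpa using this

end Stmt13
end
section
open Matrix Finset
namespace Stmt13
variable {n : ℕ} {r : Fin n → Fin n → Prop} {F : Type*} [Field F]

/-- The subring of incidence matrices with equal `(i,i)` and `(j,j)` entries. -/
def diagSub (hrefl : ∀ i, r i i) (hanti : ∀ i j, r i j → r j i → i = j)
    (htrans : ∀ i j k, r i j → r j k → r i k) (i j : Fin n) :
    Subring (Matrix (Fin n) (Fin n) F) where
  carrier := {B | B ∈ IncSet n r F ∧ B i i = B j j}
  zero_mem' := ⟨fun _ _ _ => rfl, rfl⟩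
  one_mem' := ⟨(IncSubring n r hrefl htrans F).one_mem, by
    simp [Matrix.one_apply_eq]⟩
  add_mem' := fun hX hY => ⟨(IncSubring n r hrefl htrans F).add_mem hX.1 hY.1, by
    simp [Matrix.add_apply, hX.2, hY.2]⟩
  neg_mem' := fun hX => ⟨(IncSubring n r hrefl htrans F).neg_mem hX.1, by
    simp [Matrix.neg_apply, hX.2]⟩
  mul_mem' := fun {X Y} hX hY => ⟨(IncSubring n r hrefl htrans F).mul_mem hX.1 hY.1, by
    rw [diag_mul hanti hX.1 hY.1, diag_mul hanti hX.1 hY.1, hX.2, hY.2]⟩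

/-- The subring of incidence matrices with `B i j = t * (B i i - B j j)`,
for a covering pair `i ⋖ j`. -/
def covSub (hrefl : ∀ i, r i i) (hanti : ∀ i j, r i j → r j i → i = j)
    (htrans : ∀ i j k, r i j → r j k → r i k) {i j : Fin n} (hcov : Covers r i j) (t : F) :
    Subring (Matrix (Fin n) (Fin n) F) where
  carrier := {B | B ∈ IncSet n r F ∧ B i j = t * (B i i - B j j)}
  zero_mem' := ⟨fun _ _ _ => rfl, by simp⟩
  one_mem' := ⟨(IncSubring n r hrefl htrans F).one_mem, by
    simp [Matrix.one_apply_eq, Matrix.one_apply_ne hcov.2.1]⟩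
  add_mem' := fun {X Y} hX hY => ⟨(IncSubring n r hrefl htrans F).add_mem hX.1 hY.1, by
    simp only [Matrix.add_apply, hX.2, hY.2]; ring⟩
  neg_mem' := fun {X} hX => ⟨(IncSubring n r hrefl htrans F).neg_mem hX.1, by
    simp only [Matrix.neg_apply, hX.2]; ring⟩
  mul_mem' := fun {X Y} hX hY => ⟨(IncSubring n r hrefl htrans F).mul_mem hX.1 hY.1, by
    rw [cov_mul hcov hX.1 hY.1, diag_mul hanti hX.1 hY.1, diag_mul hanti hX.1 hY.1,
      hX.2, hY.2]
    ring⟩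

lemma scalar_mem_incSet (hrefl : ∀ i, r i i) (c : F) :
    Matrix.scalar (Fin n) c ∈ IncSet n r F := by
  intro a b hab
  have : a ≠ b := fun h => hab (h ▸ hrefl a)
  simp [Matrix.scalar_apply, Matrix.diagonal_apply_ne _ this]

lemma stdBasis_mem_incSet {i j : Fin n} (hij : r i j) (c : F) :
    Matrix.single i j c ∈ IncSet n r F := by
  intro a b hab
  by_cases h : i = a ∧ j = b
  · exact absurd (h.1 ▸ h.2 ▸ hij) hab
  · simp [Matrix.single, h]

lemma necessity {m : ℕ} (hrefl : ∀ i, r i i) (hanti : ∀ i j, r i j → r j i → i = j)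
    (htrans : ∀ i j k, r i j → r j k → r i k)
    (A : Fin m → Matrix (Fin n) (Fin n) F) (hAinc : ∀ α, A α ∈ IncSet n r F)
    (hcond : (∃ i j : Fin n, i ≠ j ∧ ∀ α, A α i i = A α j j) ∨
      ∃ i j : Fin n, Covers r i j ∧ ∀ α β : Fin m,
        (A α i i - A α j j) * A β i j = (A β i i - A β j j) * A α i j) :
    (Subring.closure (Set.range A ∪ Set.range (fun c : F => Matrix.scalar (Fin n) c)) :
      Set (Matrix (Fin n) (Fin n) F)) ≠ IncSet n r F := by
  intro hEq
  -- reduce case 2 with all-equal diagonals to case 1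
  rcases hcond with ⟨i, j, hij, hdiag⟩ | ⟨i, j, hcov, hmin⟩
  · -- closure is contained in diagSub
    have hle : Subring.closure (Set.range A ∪ Set.range (fun c : F => Matrix.scalar (Fin n) c))
        ≤ diagSub hrefl hanti htrans i j := by
      rw [Subring.closure_le]
      rintro B (⟨α, rfl⟩ | ⟨c, rfl⟩)
      · exact ⟨hAinc α, hdiag α⟩
      · exact ⟨scalar_mem_incSet hrefl c, by simp [Matrix.scalar_apply]⟩
    have hE : Matrix.single i i (1 : F) ∈ IncSet n r F :=
      stdBasis_mem_incSet (hrefl i) 1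
    rw [← hEq] at hE
    have := (hle hE).2
    rw [Matrix.single_apply_same] at this
    have h0 : Matrix.single i i (1 : F) j j = 0 := by
      simp [Matrix.single, fun h : i = j => hij h]
    rw [h0] at this
    exact one_ne_zero this
  · by_cases hall : ∀ α, A α i i = A α j j
    · -- same as case 1
      have hle : Subring.closure (Set.range A ∪ Set.range (fun c : F => Matrix.scalar (Fin n) c))
          ≤ diagSub hrefl hanti htrans i j := by
        rw [Subring.closure_le]
        rintro B (⟨α, rfl⟩ | ⟨c, rfl⟩)
        · exact ⟨hAinc α, hall α⟩
        · exact ⟨scalar_mem_incSet hrefl c, by simp [Matrix.scalar_apply]⟩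
      have hE : Matrix.single i i (1 : F) ∈ IncSet n r F :=
        stdBasis_mem_incSet (hrefl i) 1
      rw [← hEq] at hE
      have := (hle hE).2
      rw [Matrix.single_apply_same] at this
      have h0 : Matrix.single i i (1 : F) j j = 0 := by
        simp [Matrix.single, fun h : i = j => hcov.2.1 h]
      rw [h0] at this
      exact one_ne_zero this
    · push_neg at hall
      obtain ⟨β, hβ⟩ := hall
      have hdβ : A β i i - A β j j ≠ 0 := sub_ne_zero.2 hβ
      set t : F := A β i j / (A β i i - A β j j) with ht
      have hle : Subring.closure (Set.range A ∪ Set.range (fun c : F => Matrix.scalar (Fin n) c))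
          ≤ covSub hrefl hanti htrans hcov t := by
        rw [Subring.closure_le]
        rintro B (⟨α, rfl⟩ | ⟨c, rfl⟩)
        · refine ⟨hAinc α, ?_⟩
          have := hmin α β
          rw [ht, div_mul_eq_mul_div, eq_div_iff hdβ]
          linear_combination -this
        · refine ⟨scalar_mem_incSet hrefl c, ?_⟩
          simp [Matrix.scalar_apply, Matrix.diagonal_apply_ne _ hcov.2.1]
      have hE : Matrix.single i j (1 : F) ∈ IncSet n r F :=
        stdBasis_mem_incSet hcov.1 1
      rw [← hEq] at hE
      have h1 := (hle hE).2
      rw [Matrix.single_apply_same] at h1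
      have h0i : Matrix.single i j (1 : F) i i = 0 := by
        simp [Matrix.single, (Ne.symm hcov.2.1 : ¬ j = i)]
      have h0j : Matrix.single i j (1 : F) j j = 0 := by
        simp [Matrix.single, fun h : i = j => hcov.2.1 h]
      rw [h0i, h0j] at h1
      simp at h1

end Stmt13
end
/-- for an incidence algebra `A = A_n(⪯,F)` over a field and
`m ≥ 2`, the complement `A^m \ Gen_m(A,F)` is an affine algebraic set (the zero
locus of a family of polynomials in the coordinates `(A_α)ᵢⱼ`); explicitly, it
is the union over pairs `i ≠ j` of the sets `{(A_α)ᵢᵢ = (A_α)ⱼⱼ ∀α}` and, over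
covering pairs `i ⋖ j`, of the sets where all 2×2 minors of the matrix with rows
`((A_α)ᵢᵢ − (A_α)ⱼⱼ)_α` and `((A_α)ᵢⱼ)_α` vanish. -/
theorem stmt13 (n m : ℕ) (hm : 2 ≤ m)
    (F : Type*) [Field F]
    (r : Fin n → Fin n → Prop)
    (hrefl : ∀ i, r i i) (hanti : ∀ i j, r i j → r j i → i = j)
    (htrans : ∀ i j k, r i j → r j k → r i k) :
    (∃ P : Set (MvPolynomial (Fin m × Fin n × Fin n) F),
      {A : Fin m → Matrix (Fin n) (Fin n) F |
          (∀ α, A α ∈ IncSet n r F) ∧ A ∉ GenSet n m r F} =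
        {A : Fin m → Matrix (Fin n) (Fin n) F |
          (∀ α, A α ∈ IncSet n r F) ∧
          ∀ p ∈ P, MvPolynomial.eval (fun x => A x.1 x.2.1 x.2.2) p = 0}) ∧
    (∀ A : Fin m → Matrix (Fin n) (Fin n) F, (∀ α, A α ∈ IncSet n r F) →
      (A ∉ GenSet n m r F ↔
        ((∃ i j : Fin n, i ≠ j ∧ ∀ α, A α i i = A α j j) ∨
          ∃ i j : Fin n, Covers r i j ∧ ∀ α β : Fin m,
            (A α i i - A α j j) * A β i j = (A β i i - A β j j) * A α i j))) := by
  classical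
  have h2 : ∀ A : Fin m → Matrix (Fin n) (Fin n) F, (∀ α, A α ∈ IncSet n r F) →
      (A ∉ GenSet n m r F ↔
        ((∃ i j : Fin n, i ≠ j ∧ ∀ α, A α i i = A α j j) ∨
          ∃ i j : Fin n, Covers r i j ∧ ∀ α β : Fin m,
            (A α i i - A α j j) * A β i j = (A β i i - A β j j) * A α i j)) := by
    intro A hAinc
    constructor
    · intro hnot
      by_contra hndisj
      push_neg at hndisj
      obtain ⟨hsep, hrank⟩ := hndisj
      apply hnot
      refine ⟨hAinc, ?_⟩
      have hle : Subring.closure (Set.range A ∪ Set.range (fun c : F => Matrix.scalar (Fin n) c))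
          ≤ IncSubring n r hrefl htrans F := by
        rw [Subring.closure_le]
        rintro B (⟨α, rfl⟩ | ⟨c, rfl⟩)
        · exact hAinc α
        · exact Stmt13.scalar_mem_incSet hrefl c
      apply Set.Subset.antisymm
      · exact fun B hB => hle hB
      · intro B hB
        exact Stmt13.suff _ hrefl hanti htrans (fun C hC => hle hC)
          (fun c => Subring.subset_closure (Or.inr ⟨c, rfl⟩)) A
          (fun α => Subring.subset_closure (Or.inl ⟨α, rfl⟩)) hsep hrank B hB
    · intro hdisj hgen
      exact Stmt13.necessity hrefl hanti htrans A hAinc hdisj hgen.2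
  refine ⟨?_, h2⟩
  -- the polynomial families
  set S : Fin n × Fin n → Set (MvPolynomial (Fin m × Fin n × Fin n) F) := fun p =>
    {q | (p.1 ≠ p.2 ∧ ∃ α : Fin m,
        q = MvPolynomial.X (α, p.1, p.1) - MvPolynomial.X (α, p.2, p.2)) ∨
      (p.1 = p.2 ∧ q = 1)} with hS
  set T : Fin n × Fin n → Set (MvPolynomial (Fin m × Fin n × Fin n) F) := fun p =>
    {q | (Covers r p.1 p.2 ∧ ∃ ab : Fin m × Fin m,
        q = (MvPolynomial.X (ab.1, p.1, p.1) - MvPolynomial.X (ab.1, p.2, p.2)) *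
              MvPolynomial.X (ab.2, p.1, p.2) -
            (MvPolynomial.X (ab.2, p.1, p.1) - MvPolynomial.X (ab.2, p.2, p.2)) *
              MvPolynomial.X (ab.1, p.1, p.2)) ∨
      (¬ Covers r p.1 p.2 ∧ q = 1)} with hT
  set U : Fin n × Fin n → Set (MvPolynomial (Fin m × Fin n × Fin n) F) := fun p =>
    Set.image2 (· * ·) (S p) (T p) with hU
  refine ⟨Set.range (fun g : (p : Fin n × Fin n) → {q // q ∈ U p} =>
    ∏ p : Fin n × Fin n, (g p : MvPolynomial (Fin m × Fin n × Fin n) F)), ?_⟩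
  ext A
  simp only [Set.mem_setOf_eq]
  constructor
  · rintro ⟨hAinc, hnot⟩
    refine ⟨hAinc, ?_⟩
    rintro q ⟨g, rfl⟩
    rw [map_prod]
    rcases (h2 A hAinc).1 hnot with ⟨i, j, hij, hdiag⟩ | ⟨i, j, hcov, hminor⟩
    · refine Finset.prod_eq_zero (Finset.mem_univ (i, j)) ?_
      obtain ⟨s, hs, t, ht, hst⟩ := (g (i, j)).2
      rw [← hst, _root_.map_mul]
      have hs0 : MvPolynomial.eval (fun x => A x.1 x.2.1 x.2.2) s = 0 := by
        rcases hs with ⟨-, α, rfl⟩ | ⟨heq, -⟩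
        · simp [hdiag α]
        · exact absurd heq hij
      rw [hs0, zero_mul]
    · refine Finset.prod_eq_zero (Finset.mem_univ (i, j)) ?_
      obtain ⟨s, hs, t, ht, hst⟩ := (g (i, j)).2
      rw [← hst, _root_.map_mul]
      have ht0 : MvPolynomial.eval (fun x => A x.1 x.2.1 x.2.2) t = 0 := by
        rcases ht with ⟨-, ab, rfl⟩ | ⟨hnc, -⟩
        · have := hminor ab.1 ab.2
          simp only [map_sub, _root_.map_mul, MvPolynomial.eval_X]
          linear_combination this
        · exact absurd hcov hnc
      rw [ht0, mul_zero]
  · rintro ⟨hAinc, hpoly⟩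
    refine ⟨hAinc, ?_⟩
    rw [h2 A hAinc]
    by_contra hndisj
    push_neg at hndisj
    obtain ⟨hsep, hrank⟩ := hndisj
    have hex : ∀ p : Fin n × Fin n, ∃ q, q ∈ U p ∧
        MvPolynomial.eval (fun x => A x.1 x.2.1 x.2.2) q ≠ 0 := by
      intro p
      have hexS : ∃ s, s ∈ S p ∧ MvPolynomial.eval (fun x => A x.1 x.2.1 x.2.2) s ≠ 0 := by
        by_cases hp : p.1 = p.2
        · exact ⟨1, Or.inr ⟨hp, rfl⟩, by simp⟩
        · obtain ⟨α, hα⟩ := hsep p.1 p.2 hp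
          refine ⟨_, Or.inl ⟨hp, α, rfl⟩, ?_⟩
          simpa [sub_eq_zero] using hα
      have hexT : ∃ t, t ∈ T p ∧ MvPolynomial.eval (fun x => A x.1 x.2.1 x.2.2) t ≠ 0 := by
        by_cases hp : Covers r p.1 p.2
        · obtain ⟨α, β, hαβ⟩ := hrank p.1 p.2 hp
          refine ⟨_, Or.inl ⟨hp, (α, β), rfl⟩, ?_⟩
          simp only [map_sub, _root_.map_mul, MvPolynomial.eval_X]
          intro hzero
          exact hαβ (by linear_combination hzero)
        · exact ⟨1, Or.inr ⟨hp, rfl⟩, by simp⟩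
      obtain ⟨s, hs, hs0⟩ := hexS
      obtain ⟨t, ht, ht0⟩ := hexT
      exact ⟨s * t, Set.mem_image2_of_mem hs ht, by rw [_root_.map_mul]; exact mul_ne_zero hs0 ht0⟩
    choose q hqU hq0 using hex
    have hmem : (∏ p : Fin n × Fin n, q p) ∈ Set.range (fun g : (p : Fin n × Fin n) → {q // q ∈ U p} =>
        ∏ p : Fin n × Fin n, (g p : MvPolynomial (Fin m × Fin n × Fin n) F)) :=
      ⟨fun p => ⟨q p, hqU p⟩, rfl⟩
    have := hpoly _ hmem
    rw [map_prod] at this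
    exact (Finset.prod_ne_zero_iff.2 fun p _ => hq0 p) this
end

section
/- For an incidence algebra A = A_n(⪯,F) over an infinite field F and m ≥ 2, the set Gen_m(A,F) of m-tuples generating A as an F-algebra is nonempty and Zariski-open (its complement is a proper affine algebraic subset of A^m). -/
noncomputable section
namespace Stmt14Aux
open scoped Classical

variable {n m : ℕ} {F : Type*} [Field F]

/-- Word products in the tuple `A`. -/
def wrd (A : Fin m → Matrix (Fin n) (Fin n) F) (l : List (Fin m)) : Matrix (Fin n) (Fin n) F :=
  (l.map A).prod

lemma wrd_cons (A : Fin m → Matrix (Fin n) (Fin n) F) (α : Fin m) (l : List (Fin m)) :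
    wrd A (α :: l) = A α * wrd A l := by simp [wrd]

lemma range_wrd_eq (A : Fin m → Matrix (Fin n) (Fin n) F) :
    Set.range (wrd A) =
      List.prod '' {l : List (Matrix (Fin n) (Fin n) F) | ∀ x ∈ l, x ∈ Set.range A} := by
  ext M
  constructor
  · rintro ⟨l, rfl⟩
    refine ⟨l.map A, fun x hx => ?_, rfl⟩
    obtain ⟨α, _, rfl⟩ := List.mem_map.1 hx; exact ⟨α, rfl⟩
  · rintro ⟨l, hl, rfl⟩
    induction l with
    | nil => exact ⟨[], rfl⟩
    | cons x l ih =>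
      obtain ⟨l', hl'⟩ := ih (fun y hy => hl y (List.mem_cons_of_mem _ hy))
      obtain ⟨α, rfl⟩ := hl x List.mem_cons_self
      exact ⟨α :: l', by simp [wrd_cons, hl']⟩

lemma closure_eq_span (A : Fin m → Matrix (Fin n) (Fin n) F) :
    (Subring.closure (Set.range A ∪ Set.range (fun c : F => Matrix.scalar (Fin n) c)) :
      Set (Matrix (Fin n) (Fin n) F)) =
      (Submodule.span F (Set.range (wrd A)) : Set _) := by
  have hsc : Set.range (fun c : F => Matrix.scalar (Fin n) c) =
      Set.range (algebraMap F (Matrix (Fin n) (Fin n) F)) := by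
    congr 1
  rw [hsc, Set.union_comm, ← Algebra.adjoin_eq_ring_closure]
  have : ((Algebra.adjoin F (Set.range A)).toSubring : Set (Matrix (Fin n) (Fin n) F)) =
      (Subalgebra.toSubmodule (Algebra.adjoin F (Set.range A)) : Set _) := rfl
  rw [this, Algebra.adjoin_eq_span]
  rw [Submonoid.closure_eq_image_prod, range_wrd_eq]

lemma span_eq_top_iff_det {S ι : Type*} [Fintype S] [DecidableEq S] (g : ι → (S → F)) :
    Submodule.span F (Set.range g) = ⊤ ↔
      ∃ s : S → ι, (Matrix.of fun t u : S => g (s t) u).det ≠ 0 := by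
  have key : ∀ s : S → ι,
      (Pi.basisFun F S).det (fun t => g (s t)) =
        (Matrix.of fun t u : S => g (s t) u).det := by
    intro s
    rw [Module.Basis.det_apply, ← Matrix.det_transpose]
    congr 1
  constructor
  · intro hspan
    obtain ⟨b, hbsub, hbspan, hbind⟩ := exists_linearIndependent F (Set.range g)
    rw [hspan] at hbspan
    let B : Module.Basis b F (S → F) := Module.Basis.mk hbind (by rw [Subtype.range_coe, hbspan])
    haveI : Fintype b := FiniteDimensional.fintypeBasisIndex B
    have hb : Fintype.card S = Fintype.card b := by
      rw [← Module.finrank_eq_card_basis B, Module.finrank_pi]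
    let q : S ≃ b := Fintype.equivOfCardEq hb
    have hs : ∀ t : S, ∃ l : ι, g l = ((q t : (S → F)) : S → F) := fun t => hbsub (q t).2
    choose s hsspec using hs
    refine ⟨s, ?_⟩
    rw [← key]
    have hv : (fun t => g (s t)) = ⇑(B.reindex q.symm) := by
      funext t
      rw [hsspec t, Module.Basis.reindex_apply, Equiv.symm_symm]
      simp [B, Module.Basis.mk_apply]
    rw [hv]
    have := (Module.Basis.is_basis_iff_det (Pi.basisFun F S)).mp
      ⟨(B.reindex q.symm).linearIndependent, (B.reindex q.symm).span_eq⟩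
    exact this.ne_zero
  · rintro ⟨s, hdet⟩
    have := (Module.Basis.is_basis_iff_det (Pi.basisFun F S)).mpr
      (isUnit_iff_ne_zero.mpr (by rw [key]; exact hdet))
    refine top_le_iff.mp ?_
    rw [← this.2]
    exact Submodule.span_mono (Set.range_comp_subset_range s g)

variable (n m F) in
/-- The matrices of variables. -/
def Xmat : Fin m → Matrix (Fin n) (Fin n) (MvPolynomial (Fin m × Fin n × Fin n) F) :=
  fun α => Matrix.of fun i j => MvPolynomial.X (α, i, j)

variable (F) in
def pw (l : List (Fin m)) : Matrix (Fin n) (Fin n) (MvPolynomial (Fin m × Fin n × Fin n) F) :=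
  (l.map (Xmat n m F)).prod

variable (F) in
def evalRH (A : Fin m → Matrix (Fin n) (Fin n) F) :
    MvPolynomial (Fin m × Fin n × Fin n) F →+* F :=
  (MvPolynomial.eval fun x : Fin m × Fin n × Fin n => A x.1 x.2.1 x.2.2)

lemma mapMatrix_Xmat (A : Fin m → Matrix (Fin n) (Fin n) F) (α : Fin m) :
    (evalRH F A).mapMatrix (Xmat n m F α) = A α := by
  ext i j
  simp [Xmat, evalRH, Matrix.map_apply]

lemma mapMatrix_pw (A : Fin m → Matrix (Fin n) (Fin n) F) (l : List (Fin m)) :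
    (evalRH F A).mapMatrix (pw F l) = wrd A l := by
  rw [pw, wrd, map_list_prod, List.map_map]
  congr 1
  exact List.map_congr_left fun α _ => mapMatrix_Xmat A α

def SIdx {n : ℕ} (r : Fin n → Fin n → Prop) := {p : Fin n × Fin n // r p.1 p.2}

instance (r : Fin n → Fin n → Prop) : Fintype (SIdx r) := Subtype.fintype _

variable (F) in
def polyDet (r : Fin n → Fin n → Prop) (s : SIdx r → List (Fin m)) :
    MvPolynomial (Fin m × Fin n × Fin n) F :=
  (Matrix.of fun t u : SIdx r => (pw F (s t)) u.1.1 u.1.2).det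

lemma eval_polyDet (r : Fin n → Fin n → Prop) (A : Fin m → Matrix (Fin n) (Fin n) F)
    (s : SIdx r → List (Fin m)) :
    evalRH F A (polyDet F r s) =
      (Matrix.of fun t u : SIdx r => (wrd A (s t)) u.1.1 u.1.2).det := by
  rw [polyDet, RingHom.map_det]
  congr 1
  ext t u
  show evalRH F A ((pw F (s t)) u.1.1 u.1.2) = (wrd A (s t)) u.1.1 u.1.2
  rw [← mapMatrix_pw A (s t)]
  rfl

lemma gen_iff_det {r : Fin n → Fin n → Prop}
    (hrefl : ∀ i, r i i) (htrans : ∀ i j k, r i j → r j k → r i k)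
    (A : Fin m → Matrix (Fin n) (Fin n) F) (hAinc : ∀ α, A α ∈ IncSet n r F) :
    (Submodule.span F (Set.range (wrd A)) : Set (Matrix (Fin n) (Fin n) F)) = IncSet n r F ↔
      ∃ s : SIdx r → List (Fin m), evalRH F A (polyDet F r s) ≠ 0 := by
  let φ : Matrix (Fin n) (Fin n) F →ₗ[F] (SIdx r → F) :=
    { toFun := fun M t => M t.1.1 t.1.2
      map_add' := fun M N => rfl
      map_smul' := fun c M => rfl }
  have hwrdinc : ∀ l, wrd A l ∈ IncSet n r F := by
    intro l
    have : wrd A l ∈ IncSubring n r hrefl htrans F := by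
      apply Subring.list_prod_mem
      intro x hx
      obtain ⟨α, _, rfl⟩ := List.mem_map.1 hx
      exact hAinc α
    exact this
  let V : Submodule F (Matrix (Fin n) (Fin n) F) :=
    { carrier := IncSet n r F
      add_mem' := fun {a b} ha hb i j h => by
        simp [Matrix.add_apply, ha i j h, hb i j h]
      zero_mem' := fun i j h => rfl
      smul_mem' := fun c M hM i j h => by
        simp [Matrix.smul_apply, hM i j h] }
  have hspanle : Submodule.span F (Set.range (wrd A)) ≤ V :=
    Submodule.span_le.mpr (by rintro x ⟨l, rfl⟩; exact hwrdinc l)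
  have hiff1 : (Submodule.span F (Set.range (wrd A)) : Set _) = IncSet n r F ↔
      Submodule.span F (Set.range (fun l => φ (wrd A l))) = ⊤ := by
    constructor
    · intro hEq
      rw [eq_top_iff]
      rintro g -
      set M : Matrix (Fin n) (Fin n) F := Matrix.of fun i j =>
        if h : r i j then g ⟨(i,j), h⟩ else 0 with hMdef
      have hMinc : M ∈ IncSet n r F := fun i j h => by simp [hMdef, h]
      have hgM : φ M = g := by
        funext t
        show M t.1.1 t.1.2 = g t
        simp only [hMdef, Matrix.of_apply, dif_pos t.2]
        exact congrArg g (Subtype.ext rfl)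
      have hMspan : M ∈ Submodule.span F (Set.range (wrd A)) := by
        rw [← SetLike.mem_coe, hEq]; exact hMinc
      rw [← hgM]
      have hmem : φ M ∈ Submodule.map φ (Submodule.span F (Set.range (wrd A))) :=
        ⟨M, hMspan, rfl⟩
      rwa [Submodule.map_span, ← Set.range_comp] at hmem
    · intro htop
      apply Set.Subset.antisymm
      · exact fun x hx => hspanle hx
      · intro M hM
        have hφM : φ M ∈ Submodule.map φ (Submodule.span F (Set.range (wrd A))) := by
          rw [Submodule.map_span, ← Set.range_comp]
          have : (fun l => φ (wrd A l)) = φ ∘ wrd A := rfl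
          rw [← this, htop]
          trivial
        obtain ⟨M', hM'span, hM'⟩ := hφM
        have hMM : M = M' := by
          ext i j
          by_cases h : r i j
          · exact (congrFun hM' ⟨(i,j), h⟩).symm
          · rw [hM i j h, hspanle hM'span i j h]
        rw [hMM]; exact hM'span
  rw [hiff1, span_eq_top_iff_det (fun l => φ (wrd A l))]
  constructor <;> rintro ⟨s, hs⟩ <;> refine ⟨s, ?_⟩
  · rw [eval_polyDet]
    exact hs
  · rw [eval_polyDet] at hs
    exact hs

theorem genset_nonempty (n m : ℕ) (hm : 2 ≤ m)
    (F : Type*) [Field F] [Infinite F]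
    (r : Fin n → Fin n → Prop)
    (hrefl : ∀ i, r i i) (hanti : ∀ i j, r i j → r j i → i = j)
    (htrans : ∀ i j k, r i j → r j k → r i k) :
    (GenSet n m r F).Nonempty := by
  -- injective scalars
  obtain ⟨c, hc⟩ : ∃ c : Fin n → F, Function.Injective c :=
    ⟨fun i => Infinite.natEmbedding F i.val,
      fun a b hab => Fin.val_injective ((Infinite.natEmbedding F).injective hab)⟩
  set D : Matrix (Fin n) (Fin n) F := Matrix.diagonal c with hD
  set N : Matrix (Fin n) (Fin n) F :=
    Matrix.of (fun i j => if Covers r i j then (1 : F) else 0) with hN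
  set A : Fin m → Matrix (Fin n) (Fin n) F :=
    fun α => if (α : ℕ) = 0 then D else if (α : ℕ) = 1 then N else 0 with hA
  set K : Subring (Matrix (Fin n) (Fin n) F) :=
    Subring.closure (Set.range A ∪ Set.range (fun c : F => Matrix.scalar (Fin n) c)) with hK
  have hDK : D ∈ K := Subring.subset_closure (Or.inl ⟨⟨0, by omega⟩, by simp [hA]⟩)
  have hNK : N ∈ K := Subring.subset_closure (Or.inl ⟨⟨1, by omega⟩, by simp [hA]⟩)
  have hsc : ∀ a : F, Matrix.scalar (Fin n) a ∈ K :=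
    fun a => Subring.subset_closure (Or.inr ⟨a, rfl⟩)
  have hsmul : ∀ (a : F) (X : Matrix (Fin n) (Fin n) F), X ∈ K → a • X ∈ K := by
    intro a X hX
    have : a • X = Matrix.scalar (Fin n) a * X := by
      rw [Matrix.scalar_apply, ← Matrix.smul_eq_diagonal_mul]
    rw [this]
    exact K.mul_mem (hsc a) hX
  -- diagonal products
  have hdiagprod : ∀ {ι : Type} (t : Finset ι) (g : ι → (Fin n → F)),
      (∀ k ∈ t, Matrix.diagonal (g k) ∈ K) → Matrix.diagonal (∏ k ∈ t, g k) ∈ K := by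
    intro ι t
    induction t using Finset.induction_on with
    | empty => intro g _; simpa using K.one_mem
    | @insert a s hnotmem ih =>
      intro g hg
      have heq : Matrix.diagonal (∏ k ∈ insert a s, g k)
          = Matrix.diagonal (g a) * Matrix.diagonal (∏ x ∈ s, g x) := by
        rw [Matrix.diagonal_mul_diagonal, Finset.prod_insert hnotmem]
        rfl
      rw [heq]
      exact K.mul_mem (hg _ (Finset.mem_insert_self _ _))
        (ih g (fun k hk => hg k (Finset.mem_insert_of_mem hk)))
  -- diagonal idempotents
  have hEii : ∀ i : Fin n, Matrix.single i i (1 : F) ∈ K := by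
    intro i
    set g : Fin n → (Fin n → F) :=
      fun k j => (c i - c k)⁻¹ * (c j - c k) with hg
    have hgK : ∀ k ∈ Finset.univ.erase i, Matrix.diagonal (g k) ∈ K := by
      intro k _
      have : Matrix.diagonal (g k) = (c i - c k)⁻¹ • (D - Matrix.scalar (Fin n) (c k)) := by
        rw [Matrix.scalar_apply, hD, Matrix.diagonal_sub, ← Matrix.diagonal_smul]
        rfl
      rw [this]
      exact hsmul _ _ (K.sub_mem hDK (hsc _))
    have hmem := hdiagprod _ g hgK
    have heval : Matrix.diagonal (∏ k ∈ Finset.univ.erase i, g k)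
        = Matrix.single i i (1 : F) := by
      ext a b
      rcases eq_or_ne a b with rfl | hab
      · rw [Matrix.diagonal_apply_eq]
        rw [Finset.prod_apply]
        rcases eq_or_ne a i with rfl | hai
        · rw [Finset.prod_eq_one, Matrix.single_apply_same]
          intro k hk
          have hki : k ≠ a := (Finset.mem_erase.mp hk).1
          exact inv_mul_cancel₀ (sub_ne_zero.mpr (fun h => hki (hc h.symm)))
        · rw [Finset.prod_eq_zero (Finset.mem_erase.mpr ⟨hai, Finset.mem_univ a⟩),
            Matrix.single_apply_of_ne]
          · tauto
          · simp [hg]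
      · rw [Matrix.diagonal_apply_ne _ hab, Matrix.single_apply_of_ne]
        rintro ⟨rfl, rfl⟩; exact hab rfl
    rw [← heval]; exact hmem
  -- covering matrix units
  have hEcov : ∀ i j : Fin n, Covers r i j → Matrix.single i j (1 : F) ∈ K := by
    intro i j hcov
    have heq : Matrix.single i i (1:F) * N * Matrix.single j j (1:F)
        = Matrix.single i j (N i j) := by
      ext a b
      rcases eq_or_ne b j with rfl | hb
      · rw [Matrix.mul_single_apply_same]
        rcases eq_or_ne a i with rfl | ha
        · rw [Matrix.single_mul_apply_same, one_mul, mul_one,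
            Matrix.single_apply_same]
        · rw [Matrix.single_mul_apply_of_ne (h := ha), zero_mul,
            Matrix.single_apply_of_row_ne (hi := Ne.symm ha)]
      · rw [Matrix.mul_single_apply_of_ne (hbj := hb),
          Matrix.single_apply_of_col_ne (hj := Ne.symm hb)]
    have hNij : N i j = 1 := by simp [hN, hcov]
    have : Matrix.single i j (1:F) ∈ K := by
      rw [← hNij, ← heq]
      exact K.mul_mem (K.mul_mem (hEii i) hNK) (hEii j)
    exact this
  -- all matrix units
  have hEall : ∀ (t : ℕ) (i j : Fin n), r i j →
      (Finset.univ.filter (fun p => r i p ∧ r p j)).card ≤ t →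
      Matrix.single i j (1 : F) ∈ K := by
    intro t
    induction t with
    | zero =>
      intro i j hij hcard
      exfalso
      have : i ∈ Finset.univ.filter (fun p => r i p ∧ r p j) :=
        Finset.mem_filter.mpr ⟨Finset.mem_univ i, hrefl i, hij⟩
      have := Finset.card_pos.mpr ⟨i, this⟩
      omega
    | succ t ih =>
      intro i j hij hcard
      rcases eq_or_ne i j with rfl | hne
      · exact hEii i
      by_cases hcov : Covers r i j
      · exact hEcov i j hcov
      · have hex : ∃ k, (r i k ∧ i ≠ k) ∧ (r k j ∧ k ≠ j) := by
          by_contra hno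
          exact hcov ⟨hij, hne, fun k hk => hno ⟨k, hk⟩⟩
        obtain ⟨k, ⟨hik, hik'⟩, hkj, hkj'⟩ := hex
        have hsub1 : (Finset.univ.filter (fun p => r i p ∧ r p k)).card ≤ t := by
          have hss : Finset.univ.filter (fun p => r i p ∧ r p k) ⊂
              Finset.univ.filter (fun p => r i p ∧ r p j) := by
            rw [Finset.ssubset_def]
            refine ⟨?_, ?_⟩
            · intro p hp
              rw [Finset.mem_filter] at hp ⊢
              exact ⟨hp.1, hp.2.1, htrans _ _ _ hp.2.2 hkj⟩
            · intro hsub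
              have hjmem : j ∈ Finset.univ.filter (fun p => r i p ∧ r p j) :=
                Finset.mem_filter.mpr ⟨Finset.mem_univ _, hij, hrefl j⟩
              have hmem2 := hsub hjmem
              rw [Finset.mem_filter] at hmem2
              exact hkj' (hanti k j hkj hmem2.2.2)
          have := Finset.card_lt_card hss
          omega
        have hsub2 : (Finset.univ.filter (fun p => r k p ∧ r p j)).card ≤ t := by
          have hss : Finset.univ.filter (fun p => r k p ∧ r p j) ⊂
              Finset.univ.filter (fun p => r i p ∧ r p j) := by
            rw [Finset.ssubset_def]
            refine ⟨?_, ?_⟩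
            · intro p hp
              rw [Finset.mem_filter] at hp ⊢
              exact ⟨hp.1, htrans _ _ _ hik hp.2.1, hp.2.2⟩
            · intro hsub
              have himem : i ∈ Finset.univ.filter (fun p => r i p ∧ r p j) :=
                Finset.mem_filter.mpr ⟨Finset.mem_univ _, hrefl i, hij⟩
              have hmem2 := hsub himem
              rw [Finset.mem_filter] at hmem2
              exact hik' (hanti i k hik hmem2.2.1)
          have := Finset.card_lt_card hss
          omega
        have h1 := ih i k hik hsub1
        have h2 := ih k j hkj hsub2
        have : Matrix.single i j (1:F) =
            Matrix.single i k (1:F) * Matrix.single k j (1:F) := by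
          rw [Matrix.single_mul_single_same, one_mul]
        rw [this]
        exact K.mul_mem h1 h2
  -- conclusion
  have hAinc : ∀ α, A α ∈ IncSet n r F := by
    intro α i j h
    have hne : i ≠ j := by rintro rfl; exact h (hrefl i)
    simp only [hA]
    split_ifs
    · exact Matrix.diagonal_apply_ne c hne
    · have : ¬ Covers r i j := fun hcov => h hcov.1
      simp [hN, this]
    · rfl
  refine ⟨A, hAinc, ?_⟩
  show (K : Set _) = IncSet n r F
  apply Set.Subset.antisymm
  · have hle : K ≤ IncSubring n r hrefl htrans F := by
      rw [hK]
      apply Subring.closure_le.mpr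
      rintro x (⟨α, rfl⟩ | ⟨a, rfl⟩)
      · exact hAinc α
      · intro i j h
        have hne : i ≠ j := by rintro rfl; exact h (hrefl i)
        show Matrix.scalar (Fin n) a i j = 0
        rw [Matrix.scalar_apply]
        exact Matrix.diagonal_apply_ne _ hne
    exact fun x hx => hle hx
  · intro M hM
    show M ∈ K
    have hsum : (∑ i, ∑ j, Matrix.single i j (M i j)) ∈ K := by
      refine K.sum_mem fun i _ => K.sum_mem fun j _ => ?_
      by_cases hij : r i j
      · have : Matrix.single i j (M i j) = (M i j) • Matrix.single i j (1:F) := by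
          rw [Matrix.smul_single, smul_eq_mul, mul_one]
        rw [this]
        exact hsmul _ _ (hEall _ i j hij le_rfl)
      · rw [hM i j hij]
        simpa using K.zero_mem
    rwa [← Matrix.matrix_eq_sum_single M] at hsum

end Stmt14Aux
end

/-- over an infinite field F and for `m ≥ 2`, the set
`Gen_m(A,F)` of m-tuples generating the incidence algebra `A = A_n(⪯,F)` is
nonempty and Zariski-open: its complement in `A^m` is a proper affine algebraic
subset of `A^m`. -/
theorem stmt14 (n m : ℕ) (hm : 2 ≤ m)
    (F : Type*) [Field F] [Infinite F]
    (r : Fin n → Fin n → Prop)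
    (hrefl : ∀ i, r i i) (hanti : ∀ i j, r i j → r j i → i = j)
    (htrans : ∀ i j k, r i j → r j k → r i k) :
    (GenSet n m r F).Nonempty ∧
    ∃ P : Set (MvPolynomial (Fin m × Fin n × Fin n) F),
      ({A : Fin m → Matrix (Fin n) (Fin n) F |
          (∀ α, A α ∈ IncSet n r F) ∧ A ∉ GenSet n m r F} =
        {A : Fin m → Matrix (Fin n) (Fin n) F |
          (∀ α, A α ∈ IncSet n r F) ∧
          ∀ p ∈ P, MvPolynomial.eval (fun x => A x.1 x.2.1 x.2.2) p = 0}) ∧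
      {A : Fin m → Matrix (Fin n) (Fin n) F |
          (∀ α, A α ∈ IncSet n r F) ∧ A ∉ GenSet n m r F} ≠
        {A : Fin m → Matrix (Fin n) (Fin n) F | ∀ α, A α ∈ IncSet n r F} := by
  have hne := Stmt14Aux.genset_nonempty n m hm F r hrefl hanti htrans
  refine ⟨hne, Set.range (Stmt14Aux.polyDet F r), ?_, ?_⟩
  · have hgen : ∀ A : Fin m → Matrix (Fin n) (Fin n) F, (∀ α, A α ∈ IncSet n r F) →
        (A ∈ GenSet n m r F ↔
          ∃ s, Stmt14Aux.evalRH F A (Stmt14Aux.polyDet F r s) ≠ 0) := by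
      intro A hAinc
      have h1 : A ∈ GenSet n m r F ↔
          (Submodule.span F (Set.range (Stmt14Aux.wrd A)) :
            Set (Matrix (Fin n) (Fin n) F)) = IncSet n r F := by
        rw [← Stmt14Aux.closure_eq_span A]
        exact ⟨fun h => h.2, fun h => ⟨hAinc, h⟩⟩
      rw [h1]
      exact Stmt14Aux.gen_iff_det hrefl htrans A hAinc
    ext A
    simp only [Set.mem_setOf_eq]
    constructor
    · rintro ⟨hinc, hnot⟩
      refine ⟨hinc, ?_⟩
      rintro p ⟨s, rfl⟩
      by_contra hne0
      exact hnot (((hgen A hinc).mpr ⟨s, hne0⟩))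
    · rintro ⟨hinc, hall⟩
      refine ⟨hinc, fun hgenmem => ?_⟩
      obtain ⟨s, hs⟩ := (hgen A hinc).mp hgenmem
      exact hs (hall _ ⟨s, rfl⟩)
  · obtain ⟨A₀, hA₀⟩ := hne
    intro heq
    have hmem : A₀ ∈ {A : Fin m → Matrix (Fin n) (Fin n) F | ∀ α, A α ∈ IncSet n r F} :=
      hA₀.1
    rw [← heq] at hmem
    exact hmem.2 hA₀
end

section
/- Let A = A_n(⪯,F) be an incidence algebra over F = ℝ or F = ℂ. Then the set of pairs (A_1, A_2) ∈ A² that do NOT generate A as an F-algebra has Lebesgue measure zero in A² ≅ F^{2ρ}; equivalently, two matrices chosen uniformly at random on the unit sphere of A² generate A with probability 1. -/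
set_option linter.unusedSectionVars false
open MeasureTheory

section ZeroLocus
variable {𝕜 : Type} [Field 𝕜] [TopologicalSpace 𝕜] [IsTopologicalRing 𝕜]
  [SecondCountableTopology 𝕜] [T1Space 𝕜] [MeasureSpace 𝕜] [BorelSpace 𝕜]
  [SigmaFinite (volume : Measure 𝕜)] [NullSingletonClass (volume : Measure 𝕜)]

theorem zeroLocus_fin : ∀ (m : ℕ) (f : MvPolynomial (Fin m) 𝕜), f ≠ 0 →
    volume {x : Fin m → 𝕜 | MvPolynomial.eval x f = 0} = 0 := by
  intro m
  induction m with
  | zero =>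
    intro f hf
    obtain ⟨c, rfl⟩ := MvPolynomial.C_surjective (Fin 0) f
    have hc : c ≠ 0 := by rintro rfl; simp at hf
    have h : {x : Fin 0 → 𝕜 | MvPolynomial.eval x (MvPolynomial.C c) = 0} = ∅ := by
      ext x; simp [hc]
    rw [h]; simp
  | succ m ih =>
    intro f hf
    set g := MvPolynomial.finSuccEquiv 𝕜 m f with hgdef
    have hg : g ≠ 0 := by
      simp only [hgdef]
      exact (map_ne_zero_iff _ (AlgEquiv.injective _)).mpr hf
    obtain ⟨k, hk⟩ : ∃ k, g.coeff k ≠ 0 := by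
      by_contra h; push_neg at h
      exact hg (Polynomial.ext fun n => by simp [h n])
    have hcont : Continuous fun p : (Fin m → 𝕜) × 𝕜 =>
        MvPolynomial.eval (Fin.cons p.2 p.1) f := by
      refine (MvPolynomial.continuous_eval f).comp (continuous_pi fun j => ?_)
      refine Fin.cases ?_ (fun i => ?_) j
      · simpa using continuous_snd
      · have hc : Continuous fun p : (Fin m → 𝕜) × 𝕜 => p.1 i := (continuous_apply i).comp continuous_fst
        simpa using hc
    have hWm : MeasurableSet {p : (Fin m → 𝕜) × 𝕜 |
        MvPolynomial.eval (Fin.cons p.2 p.1) f = 0} :=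
      hcont.measurable (measurableSet_singleton 0)
    have hW : ((volume : Measure (Fin m → 𝕜)).prod (volume : Measure 𝕜))
        {p : (Fin m → 𝕜) × 𝕜 | MvPolynomial.eval (Fin.cons p.2 p.1) f = 0} = 0 := by
      rw [Measure.measure_prod_null hWm]
      have hae : ∀ᵐ y : Fin m → 𝕜, MvPolynomial.eval y (g.coeff k) ≠ 0 := by
        rw [ae_iff]
        have := ih (g.coeff k) hk
        simpa using this
      filter_upwards [hae] with y hy
      have hq : Polynomial.map (MvPolynomial.eval y) g ≠ 0 := by
        intro h
        apply hy
        have := Polynomial.coeff_map (MvPolynomial.eval y) k (p := g)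
        rw [h] at this
        simpa using this.symm
      simp only [Pi.zero_apply]
      refine measure_mono_null ?_ ((Polynomial.finite_setOf_isRoot hq).measure_zero _)
      intro t ht
      simp only [Set.mem_preimage, Set.mem_setOf_eq] at ht ⊢
      rw [MvPolynomial.eval_eq_eval_mv_eval'] at ht
      exact ht
    have e1 := volume_preserving_piFinSuccAbove (fun _ : Fin (m+1) => 𝕜) 0
    have e2 := Measure.measurePreserving_swap (μ := (volume : Measure 𝕜))
      (ν := (volume : Measure (Fin m → 𝕜)))
    have hcomp := e2.comp e1
    have hpre : {x : Fin (m+1) → 𝕜 | MvPolynomial.eval x f = 0}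
        = (Prod.swap ∘ (MeasurableEquiv.piFinSuccAbove (fun _ : Fin (m+1) => 𝕜) 0)) ⁻¹'
          {p : (Fin m → 𝕜) × 𝕜 | MvPolynomial.eval (Fin.cons p.2 p.1) f = 0} := by
      ext x
      have he : (MeasurableEquiv.piFinSuccAbove (fun _ : Fin (m+1) => 𝕜) 0) x
          = (x 0, fun j => x ((0 : Fin (m+1)).succAbove j)) := rfl
      simp only [Set.mem_setOf_eq, Set.mem_preimage, Function.comp_apply, he, Prod.swap]
      have hx : (Fin.cons (x 0) (fun i => x ((0 : Fin (m+1)).succAbove i)) : Fin (m+1) → 𝕜)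
          = x := by
        funext j
        refine Fin.cases ?_ (fun i => ?_) j
        · simp
        · simp [Fin.zero_succAbove]
      rw [hx]
    rw [hpre, hcomp.measure_preimage hWm.nullMeasurableSet]
    exact hW

theorem zeroLocus {σ : Type} [Fintype σ] (f : MvPolynomial σ 𝕜) (hf : f ≠ 0) :
    volume {x : σ → 𝕜 | MvPolynomial.eval x f = 0} = 0 := by
  classical
  set e : Fin (Fintype.card σ) ≃ σ := (Fintype.equivFin σ).symm with hedef
  have hmp := volume_measurePreserving_piCongrLeft (fun _ : σ => 𝕜) e
  have hmeas : MeasurableSet {x : σ → 𝕜 | MvPolynomial.eval x f = 0} :=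
    (MvPolynomial.continuous_eval f).measurable (measurableSet_singleton 0)
  have hren : MvPolynomial.rename e.symm f ≠ 0 := fun h =>
    hf ((MvPolynomial.rename_injective _ e.symm.injective) (by simpa using h))
  have hpre : (MeasurableEquiv.piCongrLeft (fun _ : σ => 𝕜) e) ⁻¹'
      {x : σ → 𝕜 | MvPolynomial.eval x f = 0}
      = {y : Fin (Fintype.card σ) → 𝕜 |
          MvPolynomial.eval y (MvPolynomial.rename e.symm f) = 0} := by
    ext y
    simp only [Set.mem_preimage, Set.mem_setOf_eq, MvPolynomial.eval_rename]
    have : (MeasurableEquiv.piCongrLeft (fun _ : σ => 𝕜) e) y = y ∘ e.symm := by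
      funext s
      simp [MeasurableEquiv.piCongrLeft, Equiv.piCongrLeft]
    rw [this]
  have := hmp.measure_preimage hmeas.nullMeasurableSet
  rw [hpre] at this
  rw [← this, zeroLocus_fin _ _ hren]

end ZeroLocus

section Alg
variable (𝕜 : Type) [Field 𝕜] [CharZero 𝕜]
variable {R R' : Type} [CommRing R] [Algebra 𝕜 R] [CommRing R'] [Algebra 𝕜 R']
variable {n : ℕ} (r : Fin n → Fin n → Prop) [∀ i j, Decidable (r i j)]

noncomputable def lagr (i : Fin n) (X : Matrix (Fin n) (Fin n) R) :
    Matrix (Fin n) (Fin n) R :=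
  (((List.finRange n).filter (fun k => k ≠ i)).map
    (fun k : Fin n => ((((i : ℕ) : 𝕜) - ((k : ℕ) : 𝕜))⁻¹ : 𝕜) • (X - (((k : ℕ) : 𝕜)) • 1))).prod

noncomputable def qw (s : {p : Fin n × Fin n // r p.1 p.2})
    (X Y : Matrix (Fin n) (Fin n) R) : Matrix (Fin n) (Fin n) R :=
  if s.1.1 = s.1.2 then lagr 𝕜 s.1.1 X else lagr 𝕜 s.1.1 X * Y * lagr 𝕜 s.1.2 X

noncomputable def coordM (X Y : Matrix (Fin n) (Fin n) R) :
    Matrix {p : Fin n × Fin n // r p.1 p.2} {p : Fin n × Fin n // r p.1 p.2} R :=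
  Matrix.of fun s t => qw 𝕜 r s X Y t.1.1 t.1.2

theorem lagr_nat (φ : R →ₐ[𝕜] R') (i : Fin n) (X : Matrix (Fin n) (Fin n) R) :
    φ.mapMatrix (lagr 𝕜 i X) = lagr 𝕜 i (φ.mapMatrix X) := by
  unfold lagr
  rw [map_list_prod, List.map_map]
  congr 1
  apply List.map_congr_left
  intro k _
  simp [_root_.map_smul, map_sub]

theorem qw_nat (φ : R →ₐ[𝕜] R') (s : {p : Fin n × Fin n // r p.1 p.2})
    (X Y : Matrix (Fin n) (Fin n) R) :
    φ.mapMatrix (qw 𝕜 r s X Y) = qw 𝕜 r s (φ.mapMatrix X) (φ.mapMatrix Y) := by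
  unfold qw
  split
  · exact lagr_nat 𝕜 φ _ _
  · simp [map_mul, lagr_nat 𝕜 φ]

theorem coordM_nat (φ : R →ₐ[𝕜] R') (X Y : Matrix (Fin n) (Fin n) R) :
    (coordM 𝕜 r X Y).map φ = coordM 𝕜 r (φ.mapMatrix X) (φ.mapMatrix Y) := by
  ext s t
  have := congrArg (fun M : Matrix (Fin n) (Fin n) R' => M t.1.1 t.1.2) (qw_nat 𝕜 r φ s X Y)
  simpa [coordM, Matrix.map_apply] using this


noncomputable def Dmat : Matrix (Fin n) (Fin n) 𝕜 :=
  Matrix.diagonal fun i => ((i : ℕ) : 𝕜)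

noncomputable def Cmat : Matrix (Fin n) (Fin n) 𝕜 :=
  Matrix.of fun i j => if r i j ∧ i ≠ j then (1 : 𝕜) else 0

theorem diag_list_prod (l : List (Fin n)) (g : Fin n → Fin n → 𝕜) :
    (l.map (fun k => Matrix.diagonal (g k))).prod
      = Matrix.diagonal (fun j => (l.map (fun k => g k j)).prod) := by
  induction l with
  | nil => simp
  | cons a l ih =>
    simp only [List.map_cons, List.prod_cons, ih, Matrix.diagonal_mul_diagonal]

theorem lagr_D (i : Fin n) :
    lagr 𝕜 i (Dmat 𝕜 (n := n)) = Matrix.diagonal (fun j => if j = i then (1 : 𝕜) else 0) := by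
  unfold lagr
  have hfac : ∀ k : Fin n,
      (((((i : ℕ) : 𝕜) - ((k : ℕ) : 𝕜))⁻¹ : 𝕜) • (Dmat 𝕜 (n := n) - (((k : ℕ) : 𝕜)) • 1))
        = Matrix.diagonal (fun j : Fin n => (((i : ℕ) : 𝕜) - ((k : ℕ) : 𝕜))⁻¹
            * (((j : ℕ) : 𝕜) - ((k : ℕ) : 𝕜))) := by
    intro k
    ext a b
    simp only [Matrix.smul_apply, Matrix.sub_apply, smul_eq_mul]
    rcases eq_or_ne a b with rfl | hab
    · simp [Dmat, Matrix.diagonal_apply_eq]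
    · simp [Dmat, Matrix.diagonal_apply_ne _ hab, Matrix.one_apply_ne hab]
  rw [List.map_congr_left (fun k _ => hfac k), diag_list_prod]
  have hfun : (fun j : Fin n =>
      (((List.finRange n).filter (fun k => k ≠ i)).map
        (fun k : Fin n => (((i : ℕ) : 𝕜) - ((k : ℕ) : 𝕜))⁻¹
          * (((j : ℕ) : 𝕜) - ((k : ℕ) : 𝕜)))).prod)
      = fun j : Fin n => if j = i then (1 : 𝕜) else 0 := by
    funext j
    rcases eq_or_ne j i with hj | hji
    · rw [if_pos hj]
      apply List.prod_eq_one
      intro x hx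
      obtain ⟨k, hk, rfl⟩ := List.mem_map.mp hx
      have hki : k ≠ i := by simpa using (List.mem_filter.mp hk).2
      have hne : ((((i : ℕ) : 𝕜) - ((k : ℕ) : 𝕜))) ≠ 0 := by
        rw [sub_ne_zero]
        intro h
        exact hki ((Fin.ext (Nat.cast_injective h)).symm)
      rw [hj, inv_mul_cancel₀ hne]
    · rw [if_neg hji]
      apply List.prod_eq_zero
      refine List.mem_map.mpr ⟨j, List.mem_filter.mpr
        ⟨List.mem_finRange j, by simpa using hji⟩, by simp⟩
  rw [hfun]

theorem coordM_DC : coordM 𝕜 r (Dmat 𝕜 (n := n)) (Cmat 𝕜 r) = 1 := by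
  ext s t
  obtain ⟨⟨i, j⟩, hij⟩ := s
  obtain ⟨⟨a, b⟩, hab⟩ := t
  rw [Matrix.one_apply]
  simp only [coordM, Matrix.of_apply, qw, lagr_D]
  by_cases hd : i = j
  · subst hd
    rw [if_pos rfl]
    rcases eq_or_ne a b with rfl | hne
    · rw [Matrix.diagonal_apply_eq]
      by_cases hai : a = i
      · subst hai
        simp [Subtype.ext_iff, Prod.ext_iff]
      · simp only [if_neg hai]
        rw [if_neg]
        rintro h
        rw [Subtype.ext_iff, Prod.ext_iff] at h
        exact hai h.1.symm
    · rw [Matrix.diagonal_apply_ne _ hne, if_neg]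
      rintro h
      rw [Subtype.ext_iff, Prod.ext_iff] at h
      exact hne (h.1.symm.trans h.2)
  · rw [if_neg hd, Matrix.mul_diagonal, Matrix.diagonal_mul]
    by_cases hai : a = i
    · by_cases hbj : b = j
      · subst hai; subst hbj
        simp [Cmat, hij, hd, Subtype.ext_iff, Prod.ext_iff]
      · rw [if_neg hbj, mul_zero, if_neg]
        rintro h
        rw [Subtype.ext_iff, Prod.ext_iff] at h
        exact hbj h.2.symm
    · rw [if_neg hai, zero_mul, zero_mul, if_neg]
      rintro h
      rw [Subtype.ext_iff, Prod.ext_iff] at h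
      exact hai h.1.symm

noncomputable def Pgen : MvPolynomial
    ({p : Fin n × Fin n // r p.1 p.2} ⊕ {p : Fin n × Fin n // r p.1 p.2}) 𝕜 :=
  (coordM 𝕜 r
    (Matrix.of fun i j => if h : r i j then MvPolynomial.X (Sum.inl ⟨(i, j), h⟩) else 0)
    (Matrix.of fun i j => if h : r i j then MvPolynomial.X (Sum.inr ⟨(i, j), h⟩) else 0)).det

theorem eval_Pgen (v : {p : Fin n × Fin n // r p.1 p.2} ⊕ {p : Fin n × Fin n // r p.1 p.2} → 𝕜) :
    MvPolynomial.eval v (Pgen 𝕜 r) =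
      (coordM 𝕜 r
        (Matrix.of fun i j => if h : r i j then v (Sum.inl ⟨(i, j), h⟩) else 0)
        (Matrix.of fun i j => if h : r i j then v (Sum.inr ⟨(i, j), h⟩) else 0)).det := by
  set φ := MvPolynomial.aeval (R := 𝕜) v with hφ
  have hhom : MvPolynomial.eval v = ⇑φ := by
    funext p
    rw [hφ, MvPolynomial.aeval_def, MvPolynomial.eval, Algebra.algebraMap_self]
    rfl
  rw [hhom, Pgen, AlgHom.map_det, AlgHom.mapMatrix_apply, coordM_nat]
  have h1 : ∀ w : {p : Fin n × Fin n // r p.1 p.2} →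
      ({p : Fin n × Fin n // r p.1 p.2} ⊕ {p : Fin n × Fin n // r p.1 p.2}),
      ((Matrix.of fun i j : Fin n => if h : r i j then MvPolynomial.X (R := 𝕜) (w ⟨(i, j), h⟩)
          else 0).map ⇑φ)
        = Matrix.of fun i j : Fin n => if h : r i j then v (w ⟨(i, j), h⟩) else 0 := by
    intro w
    ext i j
    simp only [Matrix.map_apply, Matrix.of_apply]
    rw [apply_dite ⇑φ]
    simp [hφ]
  rw [AlgHom.mapMatrix_apply, AlgHom.mapMatrix_apply, h1 Sum.inl, h1 Sum.inr]

theorem Pgen_ne_zero (hrefl : ∀ i, r i i) : Pgen 𝕜 r ≠ 0 := by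
  intro h
  set v0 : {p : Fin n × Fin n // r p.1 p.2} ⊕ {p : Fin n × Fin n // r p.1 p.2} → 𝕜 :=
    Sum.elim (fun s => if s.1.1 = s.1.2 then ((s.1.1 : ℕ) : 𝕜) else 0)
      (fun s => if s.1.1 = s.1.2 then 0 else 1) with hv0
  have h1 : MvPolynomial.eval v0 (Pgen 𝕜 r) = 1 := by
    rw [eval_Pgen]
    have hD : (Matrix.of fun i j => if h : r i j then v0 (Sum.inl ⟨(i, j), h⟩) else 0)
        = Dmat 𝕜 (n := n) := by
      ext i j
      by_cases hij : r i j
      · rcases eq_or_ne i j with rfl | hne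
        · simp [hv0, Dmat, hij]
        · simp [hv0, Dmat, hij, hne, Matrix.diagonal_apply_ne _ hne]
      · have hne : i ≠ j := fun hh => hij (hh ▸ hrefl i)
        simp [hij, Dmat, Matrix.diagonal_apply_ne _ hne]
    have hC : (Matrix.of fun i j => if h : r i j then v0 (Sum.inr ⟨(i, j), h⟩) else 0)
        = Cmat 𝕜 r := by
      ext i j
      by_cases hij : r i j <;> by_cases hij2 : i = j <;>
        simp [hv0, Cmat, hij, hij2]
    rw [hD, hC, coordM_DC, Matrix.det_one]
  rw [h] at h1
  simp at h1

theorem gen_of_det_ne (hrefl : ∀ i, r i i) (htrans : ∀ i j k, r i j → r j k → r i k)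
    (x : Fin 2 → ({p : Fin n × Fin n // r p.1 p.2} → 𝕜))
    (hdet : MvPolynomial.eval (Sum.elim (x 0) (x 1)) (Pgen 𝕜 r) ≠ 0) :
    (fun α => Matrix.of fun i j : Fin n =>
        if h : r i j then x α ⟨(i, j), h⟩ else 0) ∈ GenSet n 2 r 𝕜 := by
  classical
  set A : Fin 2 → Matrix (Fin n) (Fin n) 𝕜 := fun α => Matrix.of fun i j =>
      if h : r i j then x α ⟨(i, j), h⟩ else 0 with hA
  set M := coordM 𝕜 r (A 0) (A 1) with hM
  have hMdet : M.det ≠ 0 := by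
    rw [eval_Pgen] at hdet
    exact hdet
  set cl := Subring.closure
    (Set.range A ∪ Set.range fun c : 𝕜 => Matrix.scalar (Fin n) c) with hcl
  have hscal : ∀ c : 𝕜, Matrix.scalar (Fin n) c ∈ cl := fun c =>
    Subring.subset_closure (Or.inr ⟨c, rfl⟩)
  have hsmul : ∀ (c : 𝕜) (N : Matrix (Fin n) (Fin n) 𝕜), N ∈ cl → c • N ∈ cl := by
    intro c N hN
    have hse : Matrix.scalar (Fin n) c = c • (1 : Matrix (Fin n) (Fin n) 𝕜) := by
      ext a b
      rcases eq_or_ne a b with rfl | hab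
      · simp
      · simp [Matrix.scalar_apply, Matrix.diagonal_apply_ne _ hab, Matrix.one_apply_ne hab]
    have he : c • N = Matrix.scalar (Fin n) c * N := by
      rw [hse, smul_mul_assoc, one_mul]
    rw [he]
    exact Subring.mul_mem _ (hscal c) hN
  have hAmem : ∀ α, A α ∈ cl := fun α => Subring.subset_closure (Or.inl ⟨α, rfl⟩)
  have hlagr : ∀ i : Fin n, lagr 𝕜 i (A 0) ∈ cl := by
    intro i
    refine Subring.list_prod_mem _ ?_
    intro N hN
    obtain ⟨k, -, rfl⟩ := List.mem_map.mp hN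
    exact hsmul _ _ (Subring.sub_mem _ (hAmem 0) (hsmul _ _ (Subring.one_mem _)))
  have hqw : ∀ s, qw 𝕜 r s (A 0) (A 1) ∈ cl := by
    intro s
    unfold qw
    split
    · exact hlagr _
    · exact Subring.mul_mem _ (Subring.mul_mem _ (hlagr _) (hAmem 1)) (hlagr _)
  have hsub : cl ≤ IncSubring n r hrefl htrans 𝕜 := by
    apply Subring.closure_le.mpr
    rintro N (⟨α, rfl⟩ | ⟨c, rfl⟩)
    · intro i j h
      exact dif_neg h
    · intro i j h
      have hne : i ≠ j := fun hh => h (hh ▸ hrefl i)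
      simp [Matrix.scalar_apply, Matrix.diagonal_apply_ne _ hne]
  refine ⟨fun α i j h => dif_neg h, ?_⟩
  apply Set.Subset.antisymm
  · exact fun z hz => hsub hz
  · intro B hB
    set bvec : {p : Fin n × Fin n // r p.1 p.2} → 𝕜 := fun s => B s.1.1 s.1.2 with hb
    set cv := Matrix.vecMul bvec M⁻¹ with hcv
    have hqwInc : ∀ s, qw 𝕜 r s (A 0) (A 1) ∈ IncSet n r 𝕜 := fun s => hsub (hqw s)
    have hkey : B = ∑ s, cv s • qw 𝕜 r s (A 0) (A 1) := by
      ext i j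
      by_cases h : r i j
      · have hrhs : (∑ s, cv s • qw 𝕜 r s (A 0) (A 1)) i j
            = ∑ s, cv s * (qw 𝕜 r s (A 0) (A 1)) i j := by
          simp [Matrix.sum_apply, Matrix.smul_apply, smul_eq_mul]
        rw [hrhs]
        have hMst : ∀ s, (qw 𝕜 r s (A 0) (A 1)) i j = M s ⟨(i, j), h⟩ := fun s => rfl
        have hstep : ∑ s, cv s * (qw 𝕜 r s (A 0) (A 1)) i j
            = Matrix.vecMul cv M ⟨(i, j), h⟩ := by
          simp only [hMst, Matrix.vecMul, dotProduct]
        rw [hstep, hcv, Matrix.vecMul_vecMul,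
          Matrix.nonsing_inv_mul M (isUnit_iff_ne_zero.mpr hMdet), Matrix.vecMul_one]
      · rw [hB i j h, Matrix.sum_apply]
        symm
        refine Finset.sum_eq_zero fun s _ => ?_
        rw [Matrix.smul_apply, hqwInc s i j h, smul_zero]
    rw [hkey]
    exact Subring.sum_mem _ fun s _ => hsmul _ _ (hqw s)

end Alg

section Key
variable {𝕜 : Type} [Field 𝕜] [CharZero 𝕜] [TopologicalSpace 𝕜] [IsTopologicalRing 𝕜]
  [SecondCountableTopology 𝕜] [T1Space 𝕜] [MeasureSpace 𝕜] [BorelSpace 𝕜]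
  [SigmaFinite (volume : Measure 𝕜)] [NullSingletonClass (volume : Measure 𝕜)]

theorem key_measure (n : ℕ) (r : Fin n → Fin n → Prop) [∀ i j, Decidable (r i j)]
    (hrefl : ∀ i, r i i) (htrans : ∀ i j k, r i j → r j k → r i k) :
    MeasureTheory.volume
      {x : Fin 2 → ({p : Fin n × Fin n // r p.1 p.2} → 𝕜) |
        (fun α => Matrix.of fun i j : Fin n =>
            if h : r i j then x α ⟨(i, j), h⟩ else 0) ∉ GenSet n 2 r 𝕜} = 0 := by
  classical
  have hP := Pgen_ne_zero 𝕜 r hrefl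
  have hZmeas : MeasurableSet {w : {p : Fin n × Fin n // r p.1 p.2} ⊕
      {p : Fin n × Fin n // r p.1 p.2} → 𝕜 | MvPolynomial.eval w (Pgen 𝕜 r) = 0} :=
    (MvPolynomial.continuous_eval _).measurable (measurableSet_singleton 0)
  have hZ : volume {w : {p : Fin n × Fin n // r p.1 p.2} ⊕
      {p : Fin n × Fin n // r p.1 p.2} → 𝕜 | MvPolynomial.eval w (Pgen 𝕜 r) = 0} = 0 :=
    zeroLocus _ hP
  have hmp1 := volume_preserving_finTwoArrow ({p : Fin n × Fin n // r p.1 p.2} → 𝕜)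
  have hmp2 := measurePreserving_sumPiEquivProdPi_symm
    (fun _ : {p : Fin n × Fin n // r p.1 p.2} ⊕ {p : Fin n × Fin n // r p.1 p.2} =>
      (volume : Measure 𝕜))
  have hcomp := hmp2.comp hmp1
  set Zpre := (((MeasurableEquiv.sumPiEquivProdPi
      (fun _ : {p : Fin n × Fin n // r p.1 p.2} ⊕ {p : Fin n × Fin n // r p.1 p.2} => 𝕜)).symm)
      ∘ (MeasurableEquiv.finTwoArrow)) ⁻¹'
      {w | MvPolynomial.eval w (Pgen 𝕜 r) = 0} with hZpre
  refine measure_mono_null (t := Zpre) (fun x hx => ?_) ?_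
  · rw [hZpre]
    simp only [Set.mem_preimage, Function.comp_apply, Set.mem_setOf_eq]
    have hfun : ((MeasurableEquiv.sumPiEquivProdPi
        (fun _ : {p : Fin n × Fin n // r p.1 p.2} ⊕ {p : Fin n × Fin n // r p.1 p.2} => 𝕜)).symm
          (MeasurableEquiv.finTwoArrow x)) = Sum.elim (x 0) (x 1) := by
      funext w
      cases w <;> rfl
    rw [hfun]
    by_contra hne
    exact hx (gen_of_det_ne 𝕜 r hrefl htrans x hne)
  · rw [hcomp.measure_preimage hZmeas.nullMeasurableSet]
    exact hZ

end Key

/-- for the incidence algebra `A = A_n(⪯,F)` over `F = ℝ` or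
`F = ℂ`, the set of pairs `(A₁,A₂) ∈ A²` that do not generate A as an
F-algebra has Lebesgue measure zero in `A² ≅ F^{2ρ}` (coordinates given by the
entries `(A_α)ᵢⱼ`, `i ⪯ j`); in particular two random matrices generate A with
probability 1. -/
theorem stmt15 (n : ℕ) (r : Fin n → Fin n → Prop) [∀ i j, Decidable (r i j)]
    (hrefl : ∀ i, r i i) (hanti : ∀ i j, r i j → r j i → i = j)
    (htrans : ∀ i j k, r i j → r j k → r i k) :
    (MeasureTheory.volume
        {x : Fin 2 → ({p : Fin n × Fin n // r p.1 p.2} → ℝ) |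
          (fun α => Matrix.of fun i j : Fin n =>
              if h : r i j then x α ⟨(i, j), h⟩ else 0) ∉ GenSet n 2 r ℝ} = 0) ∧
    (MeasureTheory.volume
        {x : Fin 2 → ({p : Fin n × Fin n // r p.1 p.2} → ℂ) |
          (fun α => Matrix.of fun i j : Fin n =>
              if h : r i j then x α ⟨(i, j), h⟩ else 0) ∉ GenSet n 2 r ℂ} = 0) := by
  exact ⟨key_measure n r hrefl htrans, key_measure n r hrefl htrans⟩
end
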